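/- arXiv:2406.07639 — 5 statements merged into one kernel-verified Lean document; each statement's English description precedes it below -/
import Mathlib

section
/- Let n ≥ 1 and let A be an (n+1)×(n+1) complex matrix written in blocks A = [[A₁, B],[C, D]] with A₁ ∈ M_{n×n}(ℂ), B ∈ M_{n×1}(ℂ), C ∈ M_{1×n}(ℂ), D ∈ ℂ, and suppose A*HA = H where H = diag(Id_n, −1). Then for all z, w in the open unit ball 𝔹ⁿ one has Cz + D ≠ 0 and Cw + D ≠ 0, and setting γz := (A₁z+B)/(Cz+D) ∈ ℂⁿ and γw := (A₁w+B)/(Cw+D), the automorphy identity (∑_{j=1}^n (γz)_j·conj((γw)_j) − 1)·(Cz+D)·conj(Cw+D) = ∑_{j=1}^n z_j·conj(w_j) − 1 holds. -/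
open Complex Finset Matrix

lemma key_lemma (n : ℕ)
    (A₁ : Matrix (Fin n) (Fin n) ℂ) (B : Matrix (Fin n) (Fin 1) ℂ)
    (C : Matrix (Fin 1) (Fin n) ℂ) (D : Matrix (Fin 1) (Fin 1) ℂ)
    (hA : (Matrix.fromBlocks A₁ B C D)ᴴ *
          Matrix.fromBlocks (1 : Matrix (Fin n) (Fin n) ℂ) 0 0
            (-1 : Matrix (Fin 1) (Fin 1) ℂ) *
          Matrix.fromBlocks A₁ B C D =
        Matrix.fromBlocks (1 : Matrix (Fin n) (Fin n) ℂ) 0 0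
          (-1 : Matrix (Fin 1) (Fin 1) ℂ))
    (u v : Fin n → ℂ) :
    (∑ j, starRingEnd ℂ ((∑ l, A₁ j l * v l) + B j 0) * ((∑ l, A₁ j l * u l) + B j 0))
      - starRingEnd ℂ ((∑ j, C 0 j * v j) + D 0 0) * ((∑ j, C 0 j * u j) + D 0 0)
    = (∑ j, starRingEnd ℂ (v j) * u j) - 1 := by
  set M := Matrix.fromBlocks A₁ B C D with hM
  set Hm := Matrix.fromBlocks (1 : Matrix (Fin n) (Fin n) ℂ) 0 0
      (-1 : Matrix (Fin 1) (Fin 1) ℂ) with hHm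
  set eu : (Fin n ⊕ Fin 1) → ℂ := Sum.elim u (fun _ => 1) with heu
  set ev : (Fin n ⊕ Fin 1) → ℂ := Sum.elim v (fun _ => 1) with hev
  have habs : star (M *ᵥ ev) ⬝ᵥ (Hm *ᵥ (M *ᵥ eu)) = star ev ⬝ᵥ (Hm *ᵥ eu) := by
    rw [Matrix.star_mulVec, ← dotProduct_mulVec, Matrix.mulVec_mulVec,
      Matrix.mulVec_mulVec, hA]
  have hp : M *ᵥ eu = Sum.elim (fun j => (∑ l, A₁ j l * u l) + B j 0)
      (fun _ => (∑ j, C 0 j * u j) + D 0 0) := by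
    rw [hM, heu]
    funext x
    cases x with
    | inl j => simp [Matrix.fromBlocks_mulVec, Matrix.mulVec, dotProduct,
        Fin.sum_univ_one]
    | inr j => simp [Matrix.fromBlocks_mulVec, Matrix.mulVec, dotProduct,
        Fin.sum_univ_one, Fin.eq_zero j]
  have hq : M *ᵥ ev = Sum.elim (fun j => (∑ l, A₁ j l * v l) + B j 0)
      (fun _ => (∑ j, C 0 j * v j) + D 0 0) := by
    rw [hM, hev]
    funext x
    cases x with
    | inl j => simp [Matrix.fromBlocks_mulVec, Matrix.mulVec, dotProduct,
        Fin.sum_univ_one]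
    | inr j => simp [Matrix.fromBlocks_mulVec, Matrix.mulVec, dotProduct,
        Fin.sum_univ_one, Fin.eq_zero j]
  rw [hp, hq] at habs
  rw [hHm, hev] at habs
  simp only [dotProduct, Matrix.mulVec, Fintype.sum_sum_type, Fin.sum_univ_one,
    Matrix.fromBlocks, Matrix.of_apply, Sum.elim_inl, Sum.elim_inr, Pi.star_apply,
    Matrix.one_apply, Matrix.neg_apply, Matrix.zero_apply, mul_ite, ite_mul,
    mul_one, one_mul, mul_zero, zero_mul, add_zero, zero_add, star_one, mul_neg, neg_mul,
    Finset.sum_ite_eq, Finset.mem_univ, if_true, Finset.sum_const_zero] at habs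
  rw [heu] at habs
  simp only [Sum.elim_inl, Sum.elim_inr] at habs
  simp only [starRingEnd_apply, sub_eq_add_neg]
  exact habs

/-- automorphy identity for the action of `U(n,1)` on the unit ball:
if `A = [[A₁,B],[C,D]]` satisfies `A*HA = H` with `H = diag(Id_n, −1)`, then for
`z, w` in the ball, `Cz+D ≠ 0`, `Cw+D ≠ 0` and
`(⟨γz,γw⟩ − 1)·(Cz+D)·conj(Cw+D) = ⟨z,w⟩ − 1`. -/
theorem automorphy_identity (n : ℕ) (hn : 1 ≤ n)
    (A₁ : Matrix (Fin n) (Fin n) ℂ) (B : Matrix (Fin n) (Fin 1) ℂ)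
    (C : Matrix (Fin 1) (Fin n) ℂ) (D : Matrix (Fin 1) (Fin 1) ℂ)
    (hA : (Matrix.fromBlocks A₁ B C D)ᴴ *
          Matrix.fromBlocks (1 : Matrix (Fin n) (Fin n) ℂ) 0 0
            (-1 : Matrix (Fin 1) (Fin 1) ℂ) *
          Matrix.fromBlocks A₁ B C D =
        Matrix.fromBlocks (1 : Matrix (Fin n) (Fin n) ℂ) 0 0
          (-1 : Matrix (Fin 1) (Fin 1) ℂ))
    (z w : Fin n → ℂ)
    (hz : ∑ j, Complex.normSq (z j) < 1) (hw : ∑ j, Complex.normSq (w j) < 1)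
    (cz cw : ℂ)
    (hcz : cz = (∑ j, C 0 j * z j) + D 0 0)
    (hcw : cw = (∑ j, C 0 j * w j) + D 0 0)
    (γz γw : Fin n → ℂ)
    (hγz : ∀ j, γz j = ((∑ l, A₁ j l * z l) + B j 0) / cz)
    (hγw : ∀ j, γw j = ((∑ l, A₁ j l * w l) + B j 0) / cw) :
    cz ≠ 0 ∧ cw ≠ 0 ∧
      ((∑ j, γz j * starRingEnd ℂ (γw j)) - 1) * cz * starRingEnd ℂ cw =
        (∑ j, z j * starRingEnd ℂ (w j)) - 1 := by
  have conj_self : ∀ x : ℂ, starRingEnd ℂ x * x = (Complex.normSq x : ℂ) := fun x => by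
    rw [mul_comm, Complex.mul_conj]
  -- nonvanishing
  have hne : ∀ u : Fin n → ℂ, (∑ j, Complex.normSq (u j) < 1) →
      ((∑ j, C 0 j * u j) + D 0 0) ≠ 0 := by
    intro u hu hc0
    have key := key_lemma n A₁ B C D hA u u
    simp only [conj_self, hc0, map_zero, zero_mul, mul_zero, sub_zero] at key
    have key' := congrArg Complex.re key
    push_cast at key'
    simp only [Complex.sub_re, Complex.one_re] at key'
    have h1 : (0:ℝ) ≤ ∑ j, Complex.normSq ((∑ l, A₁ j l * u l) + B j 0) :=
      Finset.sum_nonneg fun j _ => Complex.normSq_nonneg _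
    rw [show ((∑ j, (Complex.normSq ((∑ l, A₁ j l * u l) + B j 0) : ℂ)).re)
        = ∑ j, Complex.normSq ((∑ l, A₁ j l * u l) + B j 0) by
      push_cast [Complex.re_sum]; simp] at key'
    rw [show ((∑ j, (Complex.normSq (u j) : ℂ)).re) = ∑ j, Complex.normSq (u j) by
      push_cast [Complex.re_sum]; simp] at key'
    linarith
  have hz0 : cz ≠ 0 := hcz ▸ hne z hz
  have hw0 : cw ≠ 0 := hcw ▸ hne w hw
  refine ⟨hz0, hw0, ?_⟩
  have hw0' : starRingEnd ℂ cw ≠ 0 := by simpa using hw0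
  have key := key_lemma n A₁ B C D hA z w
  rw [← hcz, ← hcw] at key
  have hterm : ∀ j, γz j * starRingEnd ℂ (γw j) =
      (starRingEnd ℂ ((∑ l, A₁ j l * w l) + B j 0) * ((∑ l, A₁ j l * z l) + B j 0))
        / (cz * starRingEnd ℂ cw) := by
    intro j
    rw [hγz, hγw, map_div₀]
    field_simp
  rw [Finset.sum_congr rfl fun j _ => hterm j, ← Finset.sum_div]
  have hsw : ∑ j, z j * starRingEnd ℂ (w j) = ∑ j, starRingEnd ℂ (w j) * z j :=
    Finset.sum_congr rfl fun j _ => mul_comm _ _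
  rw [hsw]
  set T := ∑ j, starRingEnd ℂ ((∑ l, A₁ j l * w l) + B j 0) * ((∑ l, A₁ j l * z l) + B j 0)
    with hT
  set R := ∑ j, starRingEnd ℂ (w j) * z j with hR
  set cwb := starRingEnd ℂ cw with hcwb
  clear_value T R cwb
  field_simp
  linear_combination key
end

section
/- Let n ≥ 1 and let A be an (n+1)×(n+1) complex matrix written in blocks A = [[A₁, B],[C, D]] with A₁ ∈ M_{n×n}(ℂ), B ∈ M_{n×1}(ℂ), C ∈ M_{1×n}(ℂ), D ∈ ℂ, and suppose A*HA = H where H = diag(Id_n, −1). Then for every z in the open unit ball 𝔹ⁿ one has Cz + D ≠ 0, the point γz := (A₁z+B)/(Cz+D) again lies in 𝔹ⁿ, and 1 − ‖γz‖² = (1 − ‖z‖²)/|Cz+D|², where ‖z‖² := ∑_{j=1}^n |z_j|². -/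
open Complex Finset Matrix

lemma quad_form_H (n : ℕ) (v : Fin n ⊕ Fin 1 → ℂ) :
    star v ⬝ᵥ (Matrix.fromBlocks (1 : Matrix (Fin n) (Fin n) ℂ) 0 0
        (-1 : Matrix (Fin 1) (Fin 1) ℂ)).mulVec v =
      ((∑ j, Complex.normSq (v (Sum.inl j)) : ℝ) : ℂ) -
        ((Complex.normSq (v (Sum.inr 0)) : ℝ) : ℂ) := by
  simp only [dotProduct, Matrix.mulVec, Fintype.sum_sum_type, Pi.star_apply,
    Matrix.fromBlocks_apply₁₁, Matrix.fromBlocks_apply₁₂, Matrix.fromBlocks_apply₂₁,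
    Matrix.fromBlocks_apply₂₂, Matrix.one_apply, Matrix.zero_apply, Matrix.neg_apply,
    Complex.star_def]
  push_cast
  simp [Finset.mul_sum, mul_ite, Finset.sum_ite_eq', Complex.normSq_eq_conj_mul_self,
    Fin.sum_univ_one, mul_comm]
  ring

/-- an element of `U(n,1)` maps the unit ball to itself, and
`1 − ‖γz‖² = (1 − ‖z‖²)/|Cz+D|²`. -/
theorem ball_invariance (n : ℕ) (hn : 1 ≤ n)
    (A₁ : Matrix (Fin n) (Fin n) ℂ) (B : Matrix (Fin n) (Fin 1) ℂ)
    (C : Matrix (Fin 1) (Fin n) ℂ) (D : Matrix (Fin 1) (Fin 1) ℂ)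
    (hA : (Matrix.fromBlocks A₁ B C D)ᴴ *
          Matrix.fromBlocks (1 : Matrix (Fin n) (Fin n) ℂ) 0 0
            (-1 : Matrix (Fin 1) (Fin 1) ℂ) *
          Matrix.fromBlocks A₁ B C D =
        Matrix.fromBlocks (1 : Matrix (Fin n) (Fin n) ℂ) 0 0
          (-1 : Matrix (Fin 1) (Fin 1) ℂ))
    (z : Fin n → ℂ) (hz : ∑ j, Complex.normSq (z j) < 1)
    (cz : ℂ) (hcz : cz = (∑ j, C 0 j * z j) + D 0 0)
    (γz : Fin n → ℂ)
    (hγz : ∀ j, γz j = ((∑ l, A₁ j l * z l) + B j 0) / cz) :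
    cz ≠ 0 ∧ (∑ j, Complex.normSq (γz j)) < 1 ∧
      1 - ∑ j, Complex.normSq (γz j) =
        (1 - ∑ j, Complex.normSq (z j)) / Complex.normSq cz := by
  set M := Matrix.fromBlocks A₁ B C D with hM
  set u : Fin n ⊕ Fin 1 → ℂ := Sum.elim z (fun _ => 1) with hu
  set w : Fin n → ℂ := fun j => (∑ l, A₁ j l * z l) + B j 0 with hw
  have hMu : M.mulVec u = Sum.elim w (fun _ => cz) := by
    funext k
    cases k with
    | inl j => simp [hM, hu, hw, Matrix.mulVec, dotProduct, Fintype.sum_sum_type]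
    | inr j =>
        simp [hM, hu, Matrix.mulVec, dotProduct, Fintype.sum_sum_type, hcz,
          Fin.fin_one_eq_zero j]
  -- quadratic form identity
  have key : star u ⬝ᵥ ((Mᴴ * Matrix.fromBlocks (1 : Matrix (Fin n) (Fin n) ℂ) 0 0
      (-1 : Matrix (Fin 1) (Fin 1) ℂ) * M).mulVec u) =
      star u ⬝ᵥ ((Matrix.fromBlocks (1 : Matrix (Fin n) (Fin n) ℂ) 0 0
      (-1 : Matrix (Fin 1) (Fin 1) ℂ)).mulVec u) := by rw [hA]
  have lhs_eq : star u ⬝ᵥ ((Mᴴ * Matrix.fromBlocks (1 : Matrix (Fin n) (Fin n) ℂ) 0 0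
      (-1 : Matrix (Fin 1) (Fin 1) ℂ) * M).mulVec u) =
      star (M.mulVec u) ⬝ᵥ ((Matrix.fromBlocks (1 : Matrix (Fin n) (Fin n) ℂ) 0 0
      (-1 : Matrix (Fin 1) (Fin 1) ℂ)).mulVec (M.mulVec u)) := by
    rw [mul_assoc, ← Matrix.mulVec_mulVec, Matrix.dotProduct_mulVec, ← Matrix.star_mulVec,
      Matrix.mulVec_mulVec]
  rw [lhs_eq, hMu, quad_form_H, quad_form_H] at key
  simp only [Sum.elim_inl, Sum.elim_inr, hu] at key
  have keyR : (∑ j, Complex.normSq (w j)) - Complex.normSq cz =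
      (∑ j, Complex.normSq (z j)) - Complex.normSq (1 : ℂ) := by
    have := key
    exact_mod_cast this
  rw [Complex.normSq_one] at keyR
  have hwle : ∑ j, Complex.normSq (w j) = Complex.normSq cz - (1 - ∑ j, Complex.normSq (z j)) := by
    linarith
  have hwnn : 0 ≤ ∑ j, Complex.normSq (w j) :=
    Finset.sum_nonneg fun j _ => Complex.normSq_nonneg _
  have hczpos : 0 < Complex.normSq cz := by linarith
  have hczne : cz ≠ 0 := fun h => by simp [h] at hczpos
  refine ⟨hczne, ?_, ?_⟩
  · have : ∑ j, Complex.normSq (γz j) = (∑ j, Complex.normSq (w j)) / Complex.normSq cz := by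
      simp_rw [hγz, Complex.normSq_div]
      rw [← Finset.sum_div]
    rw [this, div_lt_one hczpos]
    linarith
  · have : ∑ j, Complex.normSq (γz j) = (∑ j, Complex.normSq (w j)) / Complex.normSq cz := by
      simp_rw [hγz, Complex.normSq_div]
      rw [← Finset.sum_div]
    rw [this, hwle]
    field_simp
    ring
end

section
/- Let β > 0 be a real number and let N ≥ 2 be an integer. Then both series below converge absolutely and ∑_{t ∈ ℤ} 1/(β + it)^N = ((2π)^N/(N−1)!) · ∑_{m=1}^{∞} m^{N−1} e^{−2πmβ}. In particular, ∑_{t ∈ ℤ} 1/(β + it)^N is a positive real number. -/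
open MeasureTheory Set Filter Complex Topology FourierTransform Real Asymptotics


lemma lip_integ (s : ℂ) (hs : 0 < s.re) (n : ℕ) :
    IntegrableOn (fun x : ℝ => (x:ℂ)^n * Complex.exp (-(s*x))) (Ioi 0) := by
  have hb : IntegrableOn (fun x : ℝ => x ^ (n:ℝ) * Real.exp (-s.re * x ^ (1:ℝ))) (Ioi 0) :=
    integrableOn_rpow_mul_exp_neg_mul_rpow (neg_one_lt_zero.trans_le (Nat.cast_nonneg n)) zero_lt_one hs
  refine Integrable.mono' hb ?_ ?_
  · exact (Continuous.aestronglyMeasurable (by continuity)).restrict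
  · rw [ae_restrict_iff' measurableSet_Ioi]
    filter_upwards with x hx
    rw [mem_Ioi] at hx
    rw [norm_mul, norm_pow, Complex.norm_exp]
    simp only [Complex.norm_real, Real.norm_eq_abs, abs_of_pos hx, Real.rpow_one,
      Real.rpow_natCast, neg_re, mul_re, Complex.ofReal_re, Complex.ofReal_im, mul_zero, sub_zero]
    exact le_of_eq (by ring_nf)

lemma lip_integval (s : ℂ) (hs : 0 < s.re) : ∀ n : ℕ,
    ∫ x in Ioi (0:ℝ), (x:ℂ)^n * Complex.exp (-(s*x)) = (Nat.factorial n : ℂ) / s^(n+1) := by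
  have hs0 : s ≠ 0 := fun h => by simp [h] at hs
  have hexp : ∀ x : ℝ, HasDerivAt (fun y : ℝ => Complex.exp (-(s*y))) (-s * Complex.exp (-(s*x))) x := by
    intro x
    have h1 : HasDerivAt (fun y : ℝ => -(s*(y:ℂ))) (-s) x := by
      simpa [Pi.neg_def] using ((hasDerivAt_id (x:ℂ)).const_mul s).comp_ofReal.neg
    simpa [mul_comm] using h1.cexp
  have htend : ∀ k : ℕ, Tendsto (fun x : ℝ => (x:ℂ)^k * Complex.exp (-(s*x))) atTop (𝓝 0) := by
    intro k
    rw [tendsto_zero_iff_norm_tendsto_zero]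
    have heq : ∀ᶠ x : ℝ in atTop, ‖(x:ℂ)^k * Complex.exp (-(s*x))‖ = x ^ (k:ℝ) * Real.exp (-s.re * x) := by
      filter_upwards [eventually_gt_atTop 0] with x hx
      rw [norm_mul, norm_pow, Complex.norm_exp,
        Complex.norm_real, Real.norm_eq_abs, abs_of_pos hx, Real.rpow_natCast]
      congr 1
      simp
  -- tendsto_rpow_mul_exp_neg_mul_atTop_nhds_zero
    rw [tendsto_congr' heq]
    exact tendsto_rpow_mul_exp_neg_mul_atTop_nhds_zero k s.re hs
  intro n
  induction n with
  | zero =>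
    have h0 := integral_Ioi_of_hasDerivAt_of_tendsto' (a := (0:ℝ))
      (f := fun x : ℝ => -Complex.exp (-(s*x)) / s) (f' := fun x : ℝ => Complex.exp (-(s*x)))
      (m := 0) (fun x _ => by simpa [neg_div, neg_neg, mul_div_assoc, mul_comm, mul_div_cancel_left₀ _ hs0] using ((hexp x).neg.div_const s))
      (by simpa using lip_integ s hs 0) (by simpa using ((htend 0).neg.div_const s))
    simp only [Complex.ofReal_zero, mul_zero, neg_zero, Complex.exp_zero] at h0
    simp only [pow_zero, one_mul, pow_one, Nat.factorial_zero, Nat.cast_one, h0]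
    ring
  | succ n ih =>
    have hpow : ∀ x : ℝ, HasDerivAt (fun y : ℝ => ((y:ℂ))^(n+1)) (((n+1:ℕ):ℂ) * (x:ℂ)^n) x := by
      intro x
      simpa using (hasDerivAt_pow (n+1) ((x:ℝ):ℂ)).comp_ofReal
    have hg : ∀ x : ℝ, HasDerivAt (fun y : ℝ => (y:ℂ)^(n+1) * (-Complex.exp (-(s*y)) / s))
        (((n+1:ℕ):ℂ) * (x:ℂ)^n * (-Complex.exp (-(s*x)) / s)
          + (x:ℂ)^(n+1) * Complex.exp (-(s*x))) x := by
      intro x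
      have he : HasDerivAt (fun y : ℝ => -Complex.exp (-(s*y)) / s) (Complex.exp (-(s*x))) x := by
        simpa [neg_div, neg_neg, mul_div_assoc, mul_comm, mul_div_cancel_left₀ _ hs0]
          using ((hexp x).neg.div_const s)
      simpa [Pi.mul_def] using (hpow x).mul he
    have hA : IntegrableOn (fun x : ℝ => ((n+1:ℕ):ℂ) * (x:ℂ)^n * (-Complex.exp (-(s*x)) / s))
        (Ioi 0) := by
      have h2 := (lip_integ s hs n).const_mul (-(((n+1:ℕ):ℂ)) / s)
      exact IntegrableOn.congr_fun h2 (fun x _ => by ring) measurableSet_Ioi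
    have hsum : IntegrableOn (fun x : ℝ => ((n+1:ℕ):ℂ) * (x:ℂ)^n * (-Complex.exp (-(s*x)) / s)
        + (x:ℂ)^(n+1) * Complex.exp (-(s*x))) (Ioi 0) := hA.add (lip_integ s hs (n+1))
    have htg : Tendsto (fun x : ℝ => (x:ℂ)^(n+1) * (-Complex.exp (-(s*x)) / s)) atTop (𝓝 0) := by
      have h3 := (htend (n+1)).neg.div_const s
      simp only [neg_zero, zero_div] at h3
      refine h3.congr (fun x => by ring)
    have h0 := integral_Ioi_of_hasDerivAt_of_tendsto' (a := (0:ℝ)) (m := 0)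
      (fun x _ => hg x) hsum htg
    rw [integral_add hA (lip_integ s hs (n+1))] at h0
    have hAval : ∫ x in Ioi (0:ℝ), ((n+1:ℕ):ℂ) * (x:ℂ)^n * (-Complex.exp (-(s*x)) / s)
        = (-(((n+1:ℕ):ℂ)) / s) * ((Nat.factorial n : ℂ) / s^(n+1)) := by
      rw [← ih, ← integral_const_mul]
      exact setIntegral_congr_fun measurableSet_Ioi (fun x _ => by ring)
    rw [hAval] at h0
    simp only [Complex.ofReal_zero, zero_pow (Nat.succ_ne_zero n), zero_mul, sub_zero] at h0
    have hfac : ((Nat.factorial (n+1) : ℕ) : ℂ) = ((n+1:ℕ):ℂ) * (Nat.factorial n : ℂ) := by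
      rw [Nat.factorial_succ]; push_cast; ring
    have hsp : s^(n+1+1) = s^(n+1) * s := by ring
    have hB := eq_neg_of_add_eq_zero_right h0
    rw [hB, hfac, hsp]
    field_simp

lemma lip_fourier (β : ℝ) (hβ : 0 < β) (k : ℕ) (t : ℝ) :
    𝓕 (fun x : ℝ => ((max x 0 : ℝ):ℂ)^(k+1) * Complex.exp (-(((2*π*β:ℝ):ℂ))*x)) t
      = (Nat.factorial (k+1) : ℂ) / (2*π*((β:ℂ) + (t:ℂ)*I))^(k+2) := by
  have hπ := Real.pi_pos
  set s : ℂ := 2*π*((β:ℂ) + (t:ℂ)*I) with hs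
  have hsre : 0 < s.re := by
    simp only [hs]
    simp [Complex.mul_re]
    positivity
  rw [Real.fourier_real_eq_integral_exp_smul]
  have hvan : ∀ v : ℝ, v ∉ Ioi (0:ℝ) →
      Complex.exp (↑(-2 * π * v * t) * I) • (((max v 0 : ℝ):ℂ)^(k+1) * Complex.exp (-(((2*π*β:ℝ):ℂ))*v)) = 0 := by
    intro v hv
    rw [mem_Ioi, not_lt] at hv
    rw [max_eq_right hv]
    simp [zero_pow (Nat.succ_ne_zero k)]
  rw [← setIntegral_eq_integral_of_forall_compl_eq_zero hvan]
  have hcongr : ∀ v ∈ Ioi (0:ℝ),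
      Complex.exp (↑(-2 * π * v * t) * I) • (((max v 0 : ℝ):ℂ)^(k+1) * Complex.exp (-(((2*π*β:ℝ):ℂ))*v))
        = (v:ℂ)^(k+1) * Complex.exp (-(s*v)) := by
    intro v hv
    rw [mem_Ioi] at hv
    rw [max_eq_left hv.le, smul_eq_mul]
    rw [mul_comm (Complex.exp _) _, mul_assoc, ← Complex.exp_add]
    congr 2
    push_cast [hs]
    ring
  rw [setIntegral_congr_fun measurableSet_Ioi hcongr, lip_integval s hsre (k+1)]

noncomputable def lipF (β : ℝ) (k : ℕ) : ℝ → ℂ :=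
  fun x => ((max x 0 : ℝ):ℂ)^(k+1) * Complex.exp (-(((2*π*β:ℝ):ℂ))*x)

set_option maxHeartbeats 1000000 in
/-- the Lipschitz / Poisson summation identity
`∑_{t ∈ ℤ} 1/(β + it)^N = ((2π)^N/(N−1)!)·∑_{m≥1} m^{N−1} e^{−2πmβ}`,
for real `β > 0` and an integer `N ≥ 2`; both series converge absolutely and
the left-hand side is a positive real number.  (The right-hand sum is written
over all `m : ℕ`, the `m = 0` term vanishing since `N ≥ 2`.) -/
theorem lipschitz_summation (β : ℝ) (hβ : 0 < β) (N : ℕ) (hN : 2 ≤ N) :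
    Summable (fun t : ℤ => ‖1 / ((β : ℂ) + (t : ℂ) * Complex.I) ^ N‖) ∧
      Summable (fun m : ℕ => (m : ℝ) ^ (N - 1) * Real.exp (-2 * π * m * β)) ∧
      (∑' t : ℤ, 1 / ((β : ℂ) + (t : ℂ) * Complex.I) ^ N) =
        (((2 * π) ^ N / (Nat.factorial (N - 1)) *
          ∑' m : ℕ, (m : ℝ) ^ (N - 1) * Real.exp (-2 * π * m * β) : ℝ) : ℂ) ∧
      0 < ((2 * π) ^ N / (Nat.factorial (N - 1)) *
          ∑' m : ℕ, (m : ℝ) ^ (N - 1) * Real.exp (-2 * π * m * β) : ℝ) := by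
  obtain ⟨k, rfl⟩ : ∃ k, N = k + 2 := ⟨N - 2, by omega⟩
  have hπ := Real.pi_pos
  have hc0 : 0 < 2*π*β := by positivity
  -- RHS summability
  have SR : Summable (fun m : ℕ => (m : ℝ) ^ (k+1) * Real.exp (-2 * π * m * β)) := by
    have hterm : ∀ m : ℕ, (m : ℝ) ^ (k+1) * Real.exp (-2 * π * m * β)
        = (m : ℝ) ^ (k+1) * Real.exp (-(2*π*β)) ^ m := by
      intro m
      rw [← Real.exp_nat_mul]
      ring_nf
    rw [funext hterm]
    exact summable_pow_mul_geometric_of_norm_lt_one (k+1)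
      (by rw [Real.norm_eq_abs, abs_of_pos (Real.exp_pos _)]
          exact Real.exp_lt_one_iff.mpr (by linarith))
  -- LHS summability
  have habs : ∀ t : ℤ, |(t:ℝ)| ≤ ‖(β:ℂ) + (t:ℂ)*I‖ := by
    intro t
    have h := Complex.abs_im_le_norm ((β:ℂ) + (t:ℂ)*I)
    simpa using h
  have SL : Summable (fun t : ℤ => ‖1 / ((β : ℂ) + (t : ℂ) * Complex.I) ^ (k+2)‖) := by
    have hg : Summable (fun t : ℤ => 1 / (t:ℝ)^2) := Real.summable_one_div_int_pow.mpr one_lt_two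
    refine hg.of_norm_bounded_eventually ?_
    refine Filter.mem_of_superset ((Set.finite_singleton (0:ℤ)).compl_mem_cofinite) ?_
    intro t ht
    simp only [Set.mem_compl_iff, Set.mem_singleton_iff] at ht
    simp only [Set.mem_setOf_eq, norm_norm, norm_div, norm_one, norm_pow, Real.norm_eq_abs, abs_norm]
    have h1 : (1:ℝ) ≤ |(t:ℝ)| := by
      rw [← Int.cast_abs]
      exact_mod_cast Int.one_le_abs (by exact_mod_cast ht)
    have h2 : (t:ℝ)^2 ≤ ‖(β:ℂ) + (t:ℂ)*I‖ ^ (k+2) := by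
      calc (t:ℝ)^2 = |(t:ℝ)|^2 := (_root_.sq_abs _).symm
        _ ≤ |(t:ℝ)|^(k+2) := pow_le_pow_right₀ h1 (by omega)
        _ ≤ ‖(β:ℂ) + (t:ℂ)*I‖ ^ (k+2) :=
            pow_le_pow_left₀ (abs_nonneg _) (habs t) _
    have ht2 : (0:ℝ) < (t:ℝ)^2 := by
      have h3 : (t:ℝ) ≠ 0 := by exact_mod_cast ht
      positivity
    exact one_div_le_one_div_of_le ht2 h2
  -- Fourier transform values
  have hF : ∀ t : ℤ, 𝓕 (lipF β k) t = ((Nat.factorial (k+1) : ℂ) / (2*π)^(k+2)) *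
      (1 / ((β:ℂ) + (t:ℂ)*I)^(k+2)) := by
    intro t
    have h := lip_fourier β hβ k (t:ℝ)
    rw [show 𝓕 (lipF β k) (t:ℝ) = (Nat.factorial (k+1) : ℂ) / (2*π*((β:ℂ) + ((t:ℝ):ℂ)*I))^(k+2)
      from h, mul_pow, div_mul_div_comm, mul_one]
    norm_cast
  have hTS : Summable (fun t : ℤ => 1 / ((β : ℂ) + (t : ℂ) * Complex.I) ^ (k+2)) := SL.of_norm
  have hFsum : Summable (fun t : ℤ => 𝓕 (lipF β k) t) := by
    rw [funext hF]
    exact hTS.mul_left _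
  -- continuity and decay
  have hcont : Continuous (lipF β k) := by
    unfold lipF
    exact ((Complex.continuous_ofReal.comp (continuous_id.max continuous_const)).pow _).mul
      (Complex.continuous_exp.comp (continuous_const.mul Complex.continuous_ofReal))
  have hdecay : (lipF β k) =O[cocompact ℝ] (fun x : ℝ => |x| ^ (-(2:ℝ))) := by
    rw [cocompact_eq_atBot_atTop, Asymptotics.isBigO_sup]
    constructor
    · refine (Asymptotics.isBigO_zero _ _).congr' ?_ EventuallyEq.rfl
      filter_upwards [eventually_le_atBot (0:ℝ)] with x hx
      simp only [lipF, max_eq_right hx]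
      simp [zero_pow (Nat.succ_ne_zero k)]
    · rw [Asymptotics.isBigO_iff]
      refine ⟨1, ?_⟩
      have hlim : Tendsto (fun x : ℝ => x ^ ((k:ℝ)+3) * Real.exp (-(2*π*β)*x)) atTop (𝓝 0) :=
        tendsto_rpow_mul_exp_neg_mul_atTop_nhds_zero _ _ hc0
      filter_upwards [eventually_ge_atTop (1:ℝ), hlim.eventually (eventually_le_nhds one_pos)]
        with x hx1 hx2
      have hx0 : (0:ℝ) < x := lt_of_lt_of_le one_pos hx1
      have hnf : ‖lipF β k x‖ = x^(k+1) * Real.exp (-(2*π*β)*x) := by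
        simp only [lipF]
        rw [norm_mul, norm_pow, Complex.norm_exp,
          Complex.norm_real, Real.norm_eq_abs, max_eq_left hx0.le, abs_of_pos hx0]
        congr 1
        simp
      rw [hnf]
      have hrhs : ‖|x| ^ (-(2:ℝ))‖ = x ^ (-(2:ℝ)) := by
        rw [Real.norm_eq_abs, _root_.abs_of_nonneg (Real.rpow_nonneg (abs_nonneg _) _), _root_.abs_of_pos hx0]
      rw [hrhs, one_mul]
      have key : x^(k+1) * Real.exp (-(2*π*β)*x)
          = (x ^ ((k:ℝ)+3) * Real.exp (-(2*π*β)*x)) * x ^ (-(2:ℝ)) := by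
        have hxx : x ^ ((k:ℝ)+3) * x ^ (-(2:ℝ)) = x^(k+1) := by
          rw [← Real.rpow_add hx0, ← Real.rpow_natCast x (k+1)]
          congr 1
          push_cast
          ring
        rw [← hxx]
        ring
      rw [key]
      nth_rewrite 2 [← one_mul (x ^ (-(2:ℝ)))]
      exact mul_le_mul_of_nonneg_right hx2 (Real.rpow_nonneg hx0.le _)
  -- Poisson summation
  have poisson := Real.tsum_eq_tsum_fourier_of_rpow_decay_of_summable hcont one_lt_two
    hdecay hFsum 0
  have hright : ∑' n : ℤ, 𝓕 (lipF β k) n * fourier n ((0:ℝ) : UnitAddCircle)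
      = ((Nat.factorial (k+1) : ℂ) / (2*π)^(k+2)) *
        ∑' t : ℤ, 1 / ((β:ℂ) + (t:ℂ)*I)^(k+2) := by
    rw [← tsum_mul_left]
    congr 1
    funext n
    rw [show ((0:ℝ) : UnitAddCircle) = 0 by norm_cast, fourier_eval_zero, mul_one, hF n]
  have hnat : ∀ n : ℕ, lipF β k ((0:ℝ) + ((n:ℤ):ℝ))
      = (((n : ℝ) ^ (k+1) * Real.exp (-2 * π * n * β) : ℝ) : ℂ) := by
    intro n
    simp only [lipF, zero_add, Int.cast_natCast]
    rw [max_eq_left (Nat.cast_nonneg n : (0:ℝ) ≤ (n:ℝ))]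
    push_cast
    congr 2
    ring
  have hneg : ∀ n : ℕ, lipF β k ((0:ℝ) + ((-((n:ℤ)+1) : ℤ):ℝ)) = 0 := by
    intro n
    simp only [lipF]
    have hm : max ((0:ℝ) + ((-((n:ℤ)+1) : ℤ):ℝ)) 0 = 0 := by
      apply max_eq_right
      push_cast
      linarith [Nat.cast_nonneg (α := ℝ) n]
    rw [hm]
    simp [zero_pow (Nat.succ_ne_zero k)]
  have hleft : ∑' n : ℤ, lipF β k ((0:ℝ) + (n:ℝ))
      = ((∑' m : ℕ, (m : ℝ) ^ (k+1) * Real.exp (-2 * π * m * β) : ℝ) : ℂ) := by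
    have hs1 : Summable (fun n : ℕ => lipF β k ((0:ℝ) + ((n:ℤ):ℝ))) := by
      rw [funext hnat]
      exact Complex.summable_ofReal.mpr SR
    have hs2 : Summable (fun n : ℕ => lipF β k ((0:ℝ) + ((-((n:ℤ)+1) : ℤ):ℝ))) := by
      rw [funext hneg]
      exact summable_zero
    rw [tsum_of_nat_of_neg_add_one (f := fun n : ℤ => lipF β k ((0:ℝ) + (n:ℝ))) hs1 hs2, funext hneg, tsum_zero, add_zero, funext hnat,
      ← Complex.ofReal_tsum]
  rw [hleft, hright] at poisson
  -- conclude
  have hCne : ((Nat.factorial (k+1) : ℂ) / (2*π)^(k+2)) ≠ 0 := by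
    apply div_ne_zero
    · exact_mod_cast Nat.factorial_ne_zero (k+1)
    · apply pow_ne_zero
      simp only [ne_eq, mul_eq_zero, not_or]
      constructor
      · norm_num
      · exact_mod_cast Real.pi_ne_zero
  have hmain : (∑' t : ℤ, 1 / ((β : ℂ) + (t : ℂ) * Complex.I) ^ (k+2))
      = (((2 * π) ^ (k+2) / (Nat.factorial (k+1)) *
          ∑' m : ℕ, (m : ℝ) ^ (k+1) * Real.exp (-2 * π * m * β) : ℝ) : ℂ) := by
    have h2 := poisson.symm
    rw [mul_comm] at h2
    have h3 := (div_eq_iff hCne).mpr h2.symm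
    rw [← h3]
    push_cast
    field_simp
    ring_nf
    rw [mul_comm]
    congr 1
    refine tsum_congr fun a => ?_
    ring_nf
  have hpos : 0 < ((2 * π) ^ (k+2) / (Nat.factorial (k+1)) *
          ∑' m : ℕ, (m : ℝ) ^ (k+1) * Real.exp (-2 * π * m * β) : ℝ) := by
    apply mul_pos
    · positivity
    · refine Summable.tsum_pos SR (fun m => by positivity) 1 ?_
      simp only [Nat.cast_one, one_pow, one_mul]
      exact Real.exp_pos _
  exact ⟨SL, SR, hmain, hpos⟩
end

section
/- Fix an integer n ≥ 2. There exist a constant C > 0 and an integer k₀ such that for every integer k ≥ k₀, setting N := k(n+1) and B := N/(4π), one has ∑_{u ∈ ℤ^{2(n−1)}} ∑_{t ∈ ℤ} B^N / ((B + ‖u‖²)² + t²)^{N/2} ≤ C·√N, where ‖u‖² := ∑_{i=1}^{2(n−1)} u_i² and the powers are real powers. -/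
set_option maxHeartbeats 1000000

open Real Finset

private lemma telescope_sum_le {T : ℝ} (hT : 0 < T) (s : Finset ℕ) :
    ∑ j ∈ s, (((j : ℝ) + T)⁻¹ - ((j : ℝ) + T + 1)⁻¹) ≤ T⁻¹ := by
  obtain ⟨n, hn⟩ := s.exists_nat_subset_range
  have hnn : ∀ j : ℕ, 0 ≤ ((j : ℝ) + T)⁻¹ - ((j : ℝ) + T + 1)⁻¹ := by
    intro j
    have h1 : (0 : ℝ) < (j : ℝ) + T := by positivity
    have h2 : ((j : ℝ) + T + 1)⁻¹ ≤ ((j : ℝ) + T)⁻¹ := by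
      apply inv_anti₀ h1; linarith
    linarith
  have hstep : ∑ j ∈ s, (((j : ℝ) + T)⁻¹ - ((j : ℝ) + T + 1)⁻¹)
      ≤ ∑ j ∈ Finset.range n, (((j : ℝ) + T)⁻¹ - ((j : ℝ) + T + 1)⁻¹) :=
    Finset.sum_le_sum_of_subset_of_nonneg hn fun j _ _ => hnn j
  have htel : ∑ j ∈ Finset.range n, (((j : ℝ) + T)⁻¹ - ((j : ℝ) + T + 1)⁻¹)
      = ((0 : ℝ) + T)⁻¹ - ((n : ℝ) + T)⁻¹ := by
    have := Finset.sum_range_sub' (fun j : ℕ => ((j : ℝ) + T)⁻¹) n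
    simp only [Nat.cast_zero] at this
    rw [← this]
    refine Finset.sum_congr rfl fun j _ => ?_
    push_cast; ring_nf
  have hpos : 0 ≤ ((n : ℝ) + T)⁻¹ := by positivity
  rw [htel] at hstep
  calc ∑ j ∈ s, (((j : ℝ) + T)⁻¹ - ((j : ℝ) + T + 1)⁻¹)
      ≤ ((0 : ℝ) + T)⁻¹ - ((n : ℝ) + T)⁻¹ := hstep
    _ ≤ T⁻¹ := by rw [zero_add]; linarith

private lemma hsum2 : Summable fun n : ℕ => (((n : ℝ) + 1) ^ 2)⁻¹ := by
  have h1 : Summable (fun n : ℕ => 1 / ((n : ℝ)) ^ 2) :=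
    Real.summable_one_div_nat_pow.mpr one_lt_two
  have h2 := (summable_nat_add_iff (f := fun n : ℕ => 1 / ((n : ℝ)) ^ 2) 1).mpr h1
  refine h2.congr fun n => ?_
  push_cast
  rw [one_div]

private def consEquivZ (d : ℕ) : (ℤ × (Fin d → ℤ)) ≃ (Fin (d + 1) → ℤ) where
  toFun p := Fin.cons p.1 p.2
  invFun u := (u 0, fun i => u i.succ)
  left_inv := by rintro ⟨x, v⟩; simp
  right_inv u := Fin.cons_self_tail u

@[simp] private lemma consEquivZ_apply (d : ℕ) (p : ℤ × (Fin d → ℤ)) (i : Fin (d + 1)) :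
    consEquivZ d p i = Fin.cons (α := fun _ => ℤ) p.1 p.2 i := rfl

private lemma pi_prod_summable (w : ℤ → ℝ) (h0w : ∀ j, 0 ≤ w j) (hw : Summable w) :
    ∀ d : ℕ, Summable (fun u : Fin d → ℤ => ∏ i, w (u i)) ∧
      (∑' u : Fin d → ℤ, ∏ i, w (u i)) = (∑' j, w j) ^ d := by
  intro d
  induction d with
  | zero =>
    have hs : HasSum (fun u : Fin 0 → ℤ => ∏ i, w (u i)) 1 := by
      have := hasSum_single (f := fun u : Fin 0 → ℤ => ∏ i, w (u i))
        (fun _ => (0 : ℤ)) (fun b hb => absurd (Subsingleton.elim b _) hb)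
      simpa using this
    exact ⟨hs.summable, by rw [hs.tsum_eq, pow_zero]⟩
  | succ d ih =>
    obtain ⟨hPs, hPt⟩ := ih
    set e := consEquivZ d with he
    have hkey : ∀ p : ℤ × (Fin d → ℤ), (∏ i, w (e p i)) = w p.1 * ∏ i, w (p.2 i) := by
      rintro ⟨x, v⟩
      simp only [he, consEquivZ_apply]
      rw [Fin.prod_univ_succ]
      simp
    have hprod : Summable (fun p : ℤ × (Fin d → ℤ) => w p.1 * ∏ i, w (p.2 i)) :=
      Summable.mul_of_nonneg (f := w) (g := fun v : Fin d → ℤ => ∏ i, w (v i)) hw hPs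
        (fun j => h0w j) (fun v => Finset.prod_nonneg fun i _ => h0w _)
    constructor
    · exact e.summable_iff.mp (hprod.congr fun p => (hkey p).symm)
    · calc ∑' u : Fin (d + 1) → ℤ, ∏ i, w (u i)
          = ∑' p : ℤ × (Fin d → ℤ), ∏ i, w (e p i) := (e.tsum_eq _).symm
        _ = ∑' p : ℤ × (Fin d → ℤ), w p.1 * ∏ i, w (p.2 i) := tsum_congr hkey
        _ = ∑' x : ℤ, ∑' v : Fin d → ℤ, w x * ∏ i, w (v i) := by
            refine Summable.tsum_prod' (f := fun p : ℤ × (Fin d → ℤ) => w p.1 * ∏ i, w (p.2 i)) hprod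
              fun x => ?_
            exact hPs.mul_left (w x)
        _ = ∑' x : ℤ, w x * ∑' v : Fin d → ℤ, ∏ i, w (v i) :=
            tsum_congr fun x => tsum_mul_left
        _ = (∑' j, w j) * (∑' j, w j) ^ d := by rw [hPt, tsum_mul_right]
        _ = (∑' j, w j) ^ (d + 1) := by ring

private lemma inner_sum_bound {N A B : ℝ} (hB : 1 ≤ B) (hBA : B ≤ A) (hN : 2 ≤ N) :
    Summable (fun t : ℤ => B ^ N / ((A ^ 2 + (t : ℝ) ^ 2) ^ (N / 2))) ∧
      ∑' t : ℤ, B ^ N / ((A ^ 2 + (t : ℝ) ^ 2) ^ (N / 2)) ≤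
        (B / A) ^ N * (3 + 6 * (A / Real.sqrt N)) := by
  have hB0 : (0 : ℝ) < B := by linarith
  have hA0 : (0 : ℝ) < A := by linarith
  have hN0 : (0 : ℝ) < N := by linarith
  have hsN0 : (0 : ℝ) < Real.sqrt N := Real.sqrt_pos.mpr hN0
  have hNs : Real.sqrt N * Real.sqrt N = N := Real.mul_self_sqrt hN0.le
  have hANpos : (0 : ℝ) < A ^ N := Real.rpow_pos_of_pos hA0 N
  -- (A^2)^(N/2) = A^N
  have h2N : ((A : ℝ) ^ 2) ^ (N / 2) = A ^ N := by
    rw [← Real.rpow_natCast A 2, ← Real.rpow_mul hA0.le]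
    congr 1
    push_cast
    ring
  -- uniform bound
  have fb1 : ∀ r : ℝ, B ^ N / ((A ^ 2 + r ^ 2) ^ (N / 2)) ≤ (B / A) ^ N := by
    intro r
    have hle : A ^ N ≤ (A ^ 2 + r ^ 2) ^ (N / 2) := by
      rw [← h2N]
      exact Real.rpow_le_rpow (by positivity) (by nlinarith [sq_nonneg r]) (by positivity)
    rw [Real.div_rpow hB0.le hA0.le]
    exact div_le_div_of_nonneg_left (Real.rpow_nonneg hB0.le N) hANpos hle
  -- quadratic-decay bound
  have fb2 : ∀ r : ℝ, 0 < r →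
      B ^ N / ((A ^ 2 + r ^ 2) ^ (N / 2)) ≤ (B / A) ^ N * (2 * A ^ 2 / N) * (r ^ 2)⁻¹ := by
    intro r hr
    have hx : (0 : ℝ) ≤ r ^ 2 / A ^ 2 := by positivity
    have hlow : A ^ N * (N / 2 * (r ^ 2 / A ^ 2)) ≤ (A ^ 2 + r ^ 2) ^ (N / 2) := by
      have hfact : A ^ 2 + r ^ 2 = A ^ 2 * (1 + r ^ 2 / A ^ 2) := by field_simp
      have hbern : 1 + N / 2 * (r ^ 2 / A ^ 2) ≤ (1 + r ^ 2 / A ^ 2) ^ (N / 2) :=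
        one_add_mul_self_le_rpow_one_add (by linarith) (by linarith)
      calc A ^ N * (N / 2 * (r ^ 2 / A ^ 2))
          ≤ A ^ N * (1 + N / 2 * (r ^ 2 / A ^ 2)) := by nlinarith
        _ ≤ A ^ N * ((1 + r ^ 2 / A ^ 2) ^ (N / 2)) :=
            mul_le_mul_of_nonneg_left hbern hANpos.le
        _ = (A ^ 2 + r ^ 2) ^ (N / 2) := by
            rw [hfact, Real.mul_rpow (by positivity) (by positivity), h2N]
    have hYpos : (0 : ℝ) < A ^ N * (N / 2 * (r ^ 2 / A ^ 2)) := by positivity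
    calc B ^ N / ((A ^ 2 + r ^ 2) ^ (N / 2))
        ≤ B ^ N / (A ^ N * (N / 2 * (r ^ 2 / A ^ 2))) :=
          div_le_div_of_nonneg_left (Real.rpow_nonneg hB0.le N) hYpos hlow
      _ = (B / A) ^ N * (2 * A ^ 2 / N) * (r ^ 2)⁻¹ := by
          rw [Real.div_rpow hB0.le hA0.le]
          field_simp
  -- the positive-index sequence
  set F : ℕ → ℝ := fun n => B ^ N / ((A ^ 2 + ((n : ℝ) + 1) ^ 2) ^ (N / 2)) with hF
  have hFnonneg : ∀ n, 0 ≤ F n := fun n => by positivity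
  have hFle : ∀ n : ℕ, F n ≤ (B / A) ^ N * (2 * A ^ 2 / N) * ((((n : ℝ) + 1)) ^ 2)⁻¹ :=
    fun n => fb2 ((n : ℝ) + 1) (by positivity)
  have hFsumm : Summable F :=
    Summable.of_nonneg_of_le hFnonneg hFle (hsum2.mul_left _)
  -- T = ceil(A/sqrt N)
  set T : ℕ := ⌈A / Real.sqrt N⌉₊ with hTdef
  have hT0 : (0 : ℝ) < T := by
    have : (0 : ℝ) < A / Real.sqrt N := by positivity
    exact_mod_cast Nat.cast_pos.mpr (Nat.ceil_pos.mpr this)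
  have hTge : A / Real.sqrt N ≤ (T : ℝ) := Nat.le_ceil _
  have hTle : (T : ℝ) ≤ A / Real.sqrt N + 1 := (Nat.ceil_lt_add_one (by positivity)).le
  have hq0 : (0 : ℝ) ≤ (B / A) ^ N := Real.rpow_nonneg (by positivity) N
  -- tail bound
  have htail : ∑' j : ℕ, F (j + T) ≤ (B / A) ^ N * (2 * A ^ 2 / N) * (T : ℝ)⁻¹ := by
    refine tsum_le_of_sum_le' (by positivity) fun s => ?_
    have hterm : ∀ j : ℕ, F (j + T) ≤
        (B / A) ^ N * (2 * A ^ 2 / N) * (((j : ℝ) + T)⁻¹ - ((j : ℝ) + T + 1)⁻¹) := by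
      intro j
      have hx0 : (0 : ℝ) < (j : ℝ) + T := by positivity
      have h1 : F (j + T) ≤ (B / A) ^ N * (2 * A ^ 2 / N) * ((((j : ℝ) + T) + 1) ^ 2)⁻¹ := by
        have := fb2 (((j : ℝ) + T) + 1) (by positivity)
        have hc : (((j + T : ℕ) : ℝ) + 1) = (((j : ℝ) + T) + 1) := by push_cast; ring
        rw [hF]
        simp only [hc]
        exact this
      refine h1.trans (mul_le_mul_of_nonneg_left ?_ (by positivity))
      have heq : ((j : ℝ) + T)⁻¹ - ((j : ℝ) + T + 1)⁻¹
          = (((j : ℝ) + T) * (((j : ℝ) + T) + 1))⁻¹ := by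
        rw [inv_sub_inv hx0.ne' (by positivity : ((j:ℝ) + T + 1) ≠ 0)]
        ring_nf
      rw [heq]
      apply inv_anti₀ (by positivity)
      nlinarith
    calc ∑ j ∈ s, F (j + T)
        ≤ ∑ j ∈ s, (B / A) ^ N * (2 * A ^ 2 / N) * (((j : ℝ) + T)⁻¹ - ((j : ℝ) + T + 1)⁻¹) :=
          Finset.sum_le_sum fun j _ => hterm j
      _ = (B / A) ^ N * (2 * A ^ 2 / N) *
            ∑ j ∈ s, (((j : ℝ) + T)⁻¹ - ((j : ℝ) + T + 1)⁻¹) := by rw [Finset.mul_sum]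
      _ ≤ (B / A) ^ N * (2 * A ^ 2 / N) * (T : ℝ)⁻¹ :=
          mul_le_mul_of_nonneg_left (telescope_sum_le hT0 s) (by positivity)
  -- simplify tail constant
  have htail2 : (B / A) ^ N * (2 * A ^ 2 / N) * (T : ℝ)⁻¹ ≤ (B / A) ^ N * (2 * (A / Real.sqrt N)) := by
    have hTinv : (T : ℝ)⁻¹ ≤ Real.sqrt N / A := by
      have h1 : (0 : ℝ) < A / Real.sqrt N := by positivity
      calc (T : ℝ)⁻¹ ≤ (A / Real.sqrt N)⁻¹ := inv_anti₀ h1 hTge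
        _ = Real.sqrt N / A := by rw [inv_div]
    have h2 : (2 * A ^ 2 / N) * (T : ℝ)⁻¹ ≤ (2 * A ^ 2 / N) * (Real.sqrt N / A) :=
      mul_le_mul_of_nonneg_left hTinv (by positivity)
    have h3 : (2 * A ^ 2 / N) * (Real.sqrt N / A) = 2 * (A / Real.sqrt N) := by
      rw [div_mul_div_comm, show 2 * (A / Real.sqrt N) = 2 * A / Real.sqrt N by ring,
        div_eq_div_iff (by positivity) (by positivity)]
      linear_combination (2 * A ^ 2) * hNs
    calc (B / A) ^ N * (2 * A ^ 2 / N) * (T : ℝ)⁻¹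
        = (B / A) ^ N * (2 * A ^ 2 / N * (T : ℝ)⁻¹) := by ring
      _ ≤ (B / A) ^ N * (2 * (A / Real.sqrt N)) := by
          refine mul_le_mul_of_nonneg_left ?_ hq0
          rw [← h3]; exact h2
  -- finite part
  have hfin : ∑ i ∈ Finset.range T, F i ≤ (T : ℝ) * (B / A) ^ N := by
    have := Finset.sum_le_card_nsmul (Finset.range T) F ((B / A) ^ N)
      (fun i _ => fb1 ((i : ℝ) + 1))
    simpa [Finset.card_range, nsmul_eq_mul] using this
  -- positive side sum
  have hpos : ∑' n : ℕ, F n ≤ (B / A) ^ N * (1 + 3 * (A / Real.sqrt N)) := by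
    have hsplit := Summable.sum_add_tsum_nat_add (f := F) T hFsumm
    have hx : (0 : ℝ) ≤ A / Real.sqrt N := by positivity
    calc ∑' n : ℕ, F n = ∑ i ∈ Finset.range T, F i + ∑' j : ℕ, F (j + T) := hsplit.symm
      _ ≤ (T : ℝ) * (B / A) ^ N + (B / A) ^ N * (2 * (A / Real.sqrt N)) :=
          add_le_add hfin (htail.trans htail2)
      _ ≤ (A / Real.sqrt N + 1) * (B / A) ^ N + (B / A) ^ N * (2 * (A / Real.sqrt N)) := by
          have := mul_le_mul_of_nonneg_right hTle hq0
          linarith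
      _ = (B / A) ^ N * (1 + 3 * (A / Real.sqrt N)) := by ring
  -- assemble the ℤ-sum
  set f : ℤ → ℝ := fun t => B ^ N / ((A ^ 2 + (t : ℝ) ^ 2) ^ (N / 2)) with hfdef
  have hnat1 : ∀ n : ℕ, f ((n : ℤ) + 1) = F n := by
    intro n; rw [hfdef, hF]; push_cast; ring_nf
  have hneg1 : ∀ n : ℕ, f (-((n : ℤ) + 1)) = F n := by
    intro n; rw [hfdef, hF]; push_cast; ring_nf
  have hnat : Summable fun n : ℕ => f (n : ℤ) := by
    refine (summable_nat_add_iff 1).mp ?_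
    exact hFsumm.congr fun n => by rw [← hnat1 n]; push_cast; ring_nf
  have hneg : Summable fun n : ℕ => f (-((n : ℤ) + 1)) :=
    hFsumm.congr fun n => (hneg1 n).symm
  have hsummf : Summable f := Summable.of_nat_of_neg_add_one hnat hneg
  refine ⟨hsummf, ?_⟩
  have htsum : ∑' t : ℤ, f t = (∑' n : ℕ, f (n : ℤ)) + ∑' n : ℕ, f (-((n : ℤ) + 1)) :=
    tsum_of_nat_of_neg_add_one hnat hneg
  have hzero : (∑' n : ℕ, f (n : ℤ)) = f 0 + ∑' n : ℕ, f ((n : ℤ) + 1) := by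
    rw [Summable.tsum_eq_zero_add hnat]
    push_cast
    rfl
  have hposf : ∑' n : ℕ, f ((n : ℤ) + 1) ≤ (B / A) ^ N * (1 + 3 * (A / Real.sqrt N)) := by
    rw [tsum_congr hnat1]; exact hpos
  have hnegf : ∑' n : ℕ, f (-((n : ℤ) + 1)) ≤ (B / A) ^ N * (1 + 3 * (A / Real.sqrt N)) := by
    rw [tsum_congr hneg1]; exact hpos
  have hf0 : f 0 ≤ (B / A) ^ N := by
    have := fb1 0
    simpa [hfdef] using this
  have hkey : f 0 + ((B / A) ^ N * (1 + 3 * (A / Real.sqrt N)) +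
      (B / A) ^ N * (1 + 3 * (A / Real.sqrt N))) ≤ (B / A) ^ N * (3 + 6 * (A / Real.sqrt N)) := by
    nlinarith
  calc ∑' t : ℤ, f t = f 0 + ∑' n : ℕ, f ((n : ℤ) + 1) + ∑' n : ℕ, f (-((n : ℤ) + 1)) := by
        rw [htsum, hzero]
    _ ≤ (B / A) ^ N * (3 + 6 * (A / Real.sqrt N)) := by
        have h1 := hposf; have h2 := hnegf
        nlinarith

private lemma q_pow_le_prod {d : ℕ} (hd : 1 ≤ d) {B M : ℝ} (hB : 0 < B) (hBM : B ≤ M)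
    (hdM : (d : ℝ) ≤ M) (a : Fin d → ℝ) (ha : ∀ i, 0 ≤ a i) :
    (B / (B + ∑ i, a i)) ^ M ≤ ∏ i, (1 + (d : ℝ)⁻¹ * a i)⁻¹ := by
  set m : ℝ := ∑ i, a i with hm
  have hm0 : 0 ≤ m := Finset.sum_nonneg fun i _ => ha i
  have hd0 : (0 : ℝ) < d := by exact_mod_cast hd
  have hmB : 0 ≤ m / B := div_nonneg hm0 hB.le
  have h1 : (0 : ℝ) < 1 + m / B := by linarith
  set β : ℝ := M / d with hβ
  have hβ1 : 1 ≤ β := (one_le_div hd0).mpr hdM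
  have hβB : (d : ℝ)⁻¹ ≤ β / B := by
    rw [hβ, div_div, inv_eq_one_div, div_le_div_iff₀ hd0 (by positivity)]
    nlinarith
  have hpf : ∀ i, (0:ℝ) < 1 + (d : ℝ)⁻¹ * a i := by
    intro i
    have := mul_nonneg (by positivity : (0:ℝ) ≤ (d:ℝ)⁻¹) (ha i)
    linarith
  have key2 : ∏ i, (1 + (d : ℝ)⁻¹ * a i) ≤ (1 + (β / B) * m) ^ d := by
    have hcard : (Finset.univ : Finset (Fin d)).card = d := by simp
    calc ∏ i, (1 + (d : ℝ)⁻¹ * a i)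
        ≤ ∏ _i : Fin d, (1 + (β / B) * m) := by
          refine Finset.prod_le_prod (fun i _ => (hpf i).le) fun i _ => ?_
          have hai : a i ≤ m := Finset.single_le_sum (fun j _ => ha j) (Finset.mem_univ i)
          have h2 : (d : ℝ)⁻¹ * a i ≤ (β / B) * a i :=
            mul_le_mul_of_nonneg_right hβB (ha i)
          have h3 : (β / B) * a i ≤ (β / B) * m :=
            mul_le_mul_of_nonneg_left hai (by positivity)
          linarith
      _ = (1 + (β / B) * m) ^ d := by rw [Finset.prod_const, hcard]
  have key3 : (1 + (β / B) * m) ^ d ≤ (1 + m / B) ^ M := by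
    have hb : 1 + β * (m / B) ≤ (1 + m / B) ^ β :=
      one_add_mul_self_le_rpow_one_add (by linarith) hβ1
    have hrw : (1 + m / B) ^ M = ((1 + m / B) ^ β) ^ d := by
      rw [← Real.rpow_natCast ((1 + m / B) ^ β) d, ← Real.rpow_mul h1.le]
      congr 1
      rw [hβ, div_mul_cancel₀ M hd0.ne']
    rw [hrw]
    refine pow_le_pow_left₀ ?_ ?_ d
    · positivity
    · calc 1 + (β / B) * m = 1 + β * (m / B) := by ring
        _ ≤ (1 + m / B) ^ β := hb
  have hprodpos : (0:ℝ) < ∏ i, (1 + (d : ℝ)⁻¹ * a i) :=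
    Finset.prod_pos fun i _ => hpf i
  have hq : B / (B + m) = (1 + m / B)⁻¹ := by
    rw [inv_eq_one_div, div_eq_div_iff (by linarith) (by positivity)]
    field_simp
  calc (B / (B + m)) ^ M = ((1 + m / B) ^ M)⁻¹ := by
        rw [hq, Real.inv_rpow h1.le]
    _ ≤ (∏ i, (1 + (d : ℝ)⁻¹ * a i))⁻¹ := inv_anti₀ hprodpos (key2.trans key3)
    _ = ∏ i, (1 + (d : ℝ)⁻¹ * a i)⁻¹ := by rw [Finset.prod_inv_distrib]

/-- the lattice-sum estimate at the boundary of the cuspidal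
neighborhood: for `N = k(n+1)` and `B = N/(4π)`, the sum
`∑_{u ∈ ℤ^{2(n−1)}} ∑_{t ∈ ℤ} B^N/((B + ‖u‖²)² + t²)^{N/2}` is `O(√N)`. -/
theorem cuspidal_lattice_sum_boundary (n : ℕ) (hn : 2 ≤ n) :
    ∃ C : ℝ, 0 < C ∧ ∃ k₀ : ℕ, ∀ k : ℕ, k₀ ≤ k →
      ∀ N B : ℝ, N = (k * (n + 1) : ℕ) → B = N / (4 * π) →
        (∑' u : Fin (2 * (n - 1)) → ℤ, ∑' t : ℤ,
            B ^ N / (((B + ∑ i, ((u i : ℝ)) ^ 2) ^ 2 + (t : ℝ) ^ 2) ^ (N / 2))) ≤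
          C * Real.sqrt N := by
  have hd1 : 1 ≤ 2 * (n - 1) := by omega
  have hd0R : (0 : ℝ) < ((2 * (n - 1) : ℕ) : ℝ) := by exact_mod_cast hd1
  set cd : ℝ := ((2 * (n - 1) : ℕ) : ℝ)⁻¹ with hcd
  have hcd0 : 0 < cd := by positivity
  set w : ℤ → ℝ := fun j => (1 + cd * (j : ℝ) ^ 2)⁻¹ with hw
  have h0w : ∀ j, 0 ≤ w j := by
    intro j
    have h := mul_nonneg hcd0.le (sq_nonneg ((j : ℝ)))
    have : (0:ℝ) < 1 + cd * (j : ℝ) ^ 2 := by linarith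
    exact (inv_pos.mpr this).le
  have hg : Summable fun n' : ℕ => (1 + cd * ((n' : ℝ) + 1) ^ 2)⁻¹ := by
    refine Summable.of_nonneg_of_le (fun n' => ?_) (fun n' => ?_)
      (hsum2.mul_left ((2 * (n - 1) : ℕ) : ℝ))
    · have h := mul_nonneg hcd0.le (sq_nonneg ((n' : ℝ) + 1))
      positivity
    · have hy : (0:ℝ) < ((n' : ℝ) + 1) ^ 2 := by positivity
      have h2 : (1 + cd * ((n' : ℝ) + 1) ^ 2)⁻¹ ≤ (cd * ((n' : ℝ) + 1) ^ 2)⁻¹ := by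
        apply inv_anti₀ (by positivity)
        linarith
      calc (1 + cd * ((n' : ℝ) + 1) ^ 2)⁻¹ ≤ (cd * ((n' : ℝ) + 1) ^ 2)⁻¹ := h2
        _ = ((2 * (n - 1) : ℕ) : ℝ) * (((n' : ℝ) + 1) ^ 2)⁻¹ := by
            rw [mul_inv, hcd, inv_inv]
  have hwsumm : Summable w := by
    apply Summable.of_nat_of_neg_add_one
    · refine (summable_nat_add_iff 1).mp ?_
      exact hg.congr fun n' => by rw [hw]; push_cast; ring_nf
    · exact hg.congr fun n' => by rw [hw]; push_cast; ring_nf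
  obtain ⟨hPs, hPt⟩ := pi_prod_summable w h0w hwsumm (2 * (n - 1))
  set S1 : ℝ := ∑' j, w j with hS1
  have hS10 : 0 ≤ S1 := tsum_nonneg h0w
  refine ⟨4 * S1 ^ (2 * (n - 1)) + 1, by positivity, 2 * (2 * (n - 1)) + 24, ?_⟩
  intro k hk N B hNdef hBdef
  -- basic numeric facts
  have hknat : 2 * (2 * (n - 1)) + 24 ≤ k * (n + 1) :=
    le_trans hk (Nat.le_mul_of_pos_right k (by omega))
  have hNge : 2 * ((2 * (n - 1) : ℕ) : ℝ) + 24 ≤ N := by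
    rw [hNdef]
    exact_mod_cast hknat
  have hN24 : (24 : ℝ) ≤ N := by linarith [hd0R]
  have hN0 : (0 : ℝ) < N := by linarith
  have hπ : (3 : ℝ) < π := Real.pi_gt_three
  have hπ' : π < 3.15 := Real.pi_lt_d2
  have hB0 : (0 : ℝ) < B := by rw [hBdef]; positivity
  have hB1 : 1 ≤ B := by
    rw [hBdef, le_div_iff₀ (by positivity)]
    nlinarith
  have hN2 : (2 : ℝ) ≤ N := by linarith
  have hBM : B ≤ N - 1 := by
    have h1 : B ≤ N / 4 := by
      rw [hBdef]
      exact div_le_div_of_nonneg_left hN0.le (by norm_num) (by nlinarith)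
    linarith
  have hdM : ((2 * (n - 1) : ℕ) : ℝ) ≤ N - 1 := by linarith
  have hsN0 : 0 < Real.sqrt N := Real.sqrt_pos.mpr hN0
  have hsN1 : 1 ≤ Real.sqrt N := by
    have := Real.sqrt_le_sqrt (show (1:ℝ) ≤ N by linarith)
    rwa [Real.sqrt_one] at this
  have hNs : Real.sqrt N * Real.sqrt N = N := Real.mul_self_sqrt hN0.le
  have h4 : 3 + 6 * (B / Real.sqrt N) ≤ 4 * Real.sqrt N := by
    have h6 : 6 * B ≤ N := by
      rw [hBdef, ← mul_div_assoc, div_le_iff₀ (by positivity)]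
      nlinarith
    have h7 : 6 * (B / Real.sqrt N) ≤ Real.sqrt N := by
      rw [show 6 * (B / Real.sqrt N) = 6 * B / Real.sqrt N by ring,
        div_le_iff₀ hsN0, hNs]
      exact h6
    linarith
  -- the majorant
  set G : (Fin (2 * (n - 1)) → ℤ) → ℝ := fun u => (∏ i, w (u i)) * (4 * Real.sqrt N) with hG
  have hGsum : Summable G := hPs.mul_right _
  have hbound : ∀ u : Fin (2 * (n - 1)) → ℤ,
      (∑' t : ℤ, B ^ N / (((B + ∑ i, ((u i : ℝ)) ^ 2) ^ 2 + (t : ℝ) ^ 2) ^ (N / 2))) ≤ G u := by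
    intro u
    set m : ℝ := ∑ i, ((u i : ℝ)) ^ 2 with hm
    have hm0 : 0 ≤ m := Finset.sum_nonneg fun i _ => sq_nonneg _
    have hA0 : (0:ℝ) < B + m := by linarith
    obtain ⟨hfs, hfb⟩ := inner_sum_bound (A := B + m) hB1 (le_add_of_nonneg_right hm0) hN2
    have hq0' : 0 < B / (B + m) := div_pos hB0 hA0
    have hq1 : B / (B + m) ≤ 1 := (div_le_one hA0).mpr (by linarith)
    have hqN1 : (0:ℝ) ≤ (B / (B + m)) ^ (N - 1) := Real.rpow_nonneg hq0'.le _
    have hsplit : (B / (B + m)) ^ N = (B / (B + m)) ^ (N - 1) * (B / (B + m)) := by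
      conv_lhs => rw [show N = (N - 1) + 1 by ring]
      rw [Real.rpow_add_one hq0'.ne']
    have hqa : (B / (B + m)) * ((B + m) / Real.sqrt N) = B / Real.sqrt N := by
      rw [div_mul_div_comm, mul_comm B (B + m), mul_div_mul_left _ _ hA0.ne']
    have step2 : (B / (B + m)) ^ N * (3 + 6 * ((B + m) / Real.sqrt N)) ≤
        (B / (B + m)) ^ (N - 1) * (4 * Real.sqrt N) := by
      have hexp : (B / (B + m)) ^ N * (3 + 6 * ((B + m) / Real.sqrt N)) =
          (B / (B + m)) ^ (N - 1) *
            ((B / (B + m)) * 3 + 6 * ((B / (B + m)) * ((B + m) / Real.sqrt N))) := by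
        rw [hsplit]; ring
      rw [hexp, hqa]
      refine mul_le_mul_of_nonneg_left ?_ hqN1
      linarith
    have step3 : (B / (B + m)) ^ (N - 1) ≤ ∏ i, w (u i) := by
      simp only [hw]
      rw [hcd]
      exact q_pow_le_prod hd1 hB0 hBM hdM (fun i => ((u i : ℝ)) ^ 2)
        (fun i => sq_nonneg _)
    calc (∑' t : ℤ, B ^ N / (((B + m) ^ 2 + (t : ℝ) ^ 2) ^ (N / 2)))
        ≤ (B / (B + m)) ^ N * (3 + 6 * ((B + m) / Real.sqrt N)) := hfb
      _ ≤ (B / (B + m)) ^ (N - 1) * (4 * Real.sqrt N) := step2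
      _ ≤ (∏ i, w (u i)) * (4 * Real.sqrt N) :=
          mul_le_mul_of_nonneg_right step3 (by positivity)
  have hsummInner : Summable (fun u : Fin (2 * (n - 1)) → ℤ =>
      ∑' t : ℤ, B ^ N / (((B + ∑ i, ((u i : ℝ)) ^ 2) ^ 2 + (t : ℝ) ^ 2) ^ (N / 2))) :=
    Summable.of_nonneg_of_le (fun u => tsum_nonneg fun t => by positivity) hbound hGsum
  calc (∑' u : Fin (2 * (n - 1)) → ℤ, ∑' t : ℤ,
        B ^ N / (((B + ∑ i, ((u i : ℝ)) ^ 2) ^ 2 + (t : ℝ) ^ 2) ^ (N / 2)))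
      ≤ ∑' u : Fin (2 * (n - 1)) → ℤ, G u := Summable.tsum_le_tsum hbound hsummInner hGsum
    _ = (∑' u : Fin (2 * (n - 1)) → ℤ, ∏ i, w (u i)) * (4 * Real.sqrt N) := tsum_mul_right
    _ = S1 ^ (2 * (n - 1)) * (4 * Real.sqrt N) := by rw [hPt]
    _ ≤ (4 * S1 ^ (2 * (n - 1)) + 1) * Real.sqrt N := by
        nlinarith [Real.sqrt_nonneg N, pow_nonneg hS10 (2 * (n - 1))]
end

section
/- Fix an integer n ≥ 2 and a real number x₀ ≥ 1. There exist a constant C > 0 and an integer k₀ such that for every integer k ≥ k₀, setting N := k(n+1), and for every real number x with x₀ ≤ x ≤ N/(4π), one has ∑_{u ∈ ℤ^{2(n−1)}} ∑_{t ∈ ℤ} x^N / ((x + ‖u‖²)² + t²)^{N/2} ≤ C·√x, where ‖u‖² := ∑_{i=1}^{2(n−1)} u_i² and the powers are real powers. -/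
open Real Finset

lemma lfin (c : ℝ) (hc : 1 ≤ c) (M : ℕ) :
    ∑ t ∈ Finset.range M, c / (c + (t : ℝ) ^ 2) ≤ 1 + 2 * Real.sqrt c := by
  have hc0 : (0:ℝ) < c := lt_of_lt_of_le one_pos hc
  have hsq : 1 ≤ Real.sqrt c := by
    rw [show (1:ℝ) = Real.sqrt 1 by simp]
    exact Real.sqrt_le_sqrt hc
  set a := Real.sqrt c with ha
  have ha2 : a ^ 2 = c := Real.sq_sqrt hc0.le
  have ha0 : (0:ℝ) < a := lt_of_lt_of_le one_pos hsq
  cases M with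
  | zero => simp; positivity
  | succ M =>
    rw [Finset.sum_range_succ']
    have h0 : c / (c + ((0:ℕ) : ℝ) ^ 2) = 1 := by
      norm_num
      exact hc0.ne'
    rw [h0]
    have key : ∀ j : ℕ, c / (c + ((j:ℝ) + 1) ^ 2) ≤
        2 * c * (1 / (a + (j:ℝ)) - 1 / (a + (j:ℝ) + 1)) := by
      intro j
      have hj0 : (0:ℝ) ≤ (j:ℝ) := Nat.cast_nonneg j
      have h1 : 1 / (a + (j:ℝ)) - 1 / (a + (j:ℝ) + 1)
          = 1 / ((a + (j:ℝ)) * (a + (j:ℝ) + 1)) := by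
        field_simp
        ring
      rw [h1]
      have h2 : c / (c + ((j:ℝ) + 1) ^ 2) ≤ 2 * c / (a + (j:ℝ) + 1) ^ 2 := by
        rw [div_le_div_iff₀ (by positivity) (by positivity)]
        nlinarith [sq_nonneg (a - ((j:ℝ) + 1))]
      refine h2.trans ?_
      rw [mul_one_div, div_le_div_iff₀ (by positivity) (by positivity)]
      nlinarith [sq_nonneg a, ha0]
    calc ∑ j ∈ Finset.range M, c / (c + ((j + 1 : ℕ) : ℝ) ^ 2) + 1
        ≤ ∑ j ∈ Finset.range M, 2 * c * (1 / (a + (j:ℝ)) - 1 / (a + (j:ℝ) + 1)) + 1 := by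
          gcongr with j hj
          · push_cast
            exact key j
      _ ≤ 1 + 2 * a := by
          have tel : ∑ j ∈ Finset.range M, 2 * c * (1 / (a + (j:ℝ)) - 1 / (a + (j:ℝ) + 1))
              = 2 * c * (1 / (a + ((0:ℕ):ℝ)) - 1 / (a + (M:ℝ))) := by
            rw [← Finset.sum_range_sub' (fun j : ℕ => 1 / (a + (j:ℝ))) M, Finset.mul_sum]
            apply Finset.sum_congr rfl
            intro j _
            push_cast
            ring
          rw [tel]
          have h1 : (0:ℝ) ≤ 1 / (a + (M:ℝ)) := by positivity
          have hca : 2 * c * (1 / a) = 2 * a := by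
            field_simp
            nlinarith [ha2]
          have h2 : 2 * c * (1 / (a + ((0:ℕ):ℝ)) - 1 / (a + (M:ℝ))) ≤ 2 * c * (1 / a) := by
            simp only [Nat.cast_zero, add_zero]
            nlinarith [h1, hc0]
          linarith

lemma lnat (c : ℝ) (hc : 1 ≤ c) :
    ∑' t : ℕ, ENNReal.ofReal (c / (c + (t : ℝ) ^ 2)) ≤ ENNReal.ofReal (1 + 2 * Real.sqrt c) := by
  rw [ENNReal.tsum_eq_iSup_sum]
  refine iSup_le fun s => ?_
  obtain ⟨M, hM⟩ := s.exists_nat_subset_range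
  calc ∑ t ∈ s, ENNReal.ofReal (c / (c + (t : ℝ) ^ 2))
      ≤ ∑ t ∈ Finset.range M, ENNReal.ofReal (c / (c + (t : ℝ) ^ 2)) :=
        Finset.sum_le_sum_of_subset hM
    _ = ENNReal.ofReal (∑ t ∈ Finset.range M, c / (c + (t : ℝ) ^ 2)) := by
        rw [ENNReal.ofReal_sum_of_nonneg]
        intro i _
        positivity
    _ ≤ ENNReal.ofReal (1 + 2 * Real.sqrt c) := ENNReal.ofReal_le_ofReal (lfin c hc M)

lemma lint (c : ℝ) (hc : 1 ≤ c) :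
    ∑' t : ℤ, ENNReal.ofReal (c / (c + (t : ℝ) ^ 2)) ≤ ENNReal.ofReal (6 * Real.sqrt c) := by
  have hc0 : (0:ℝ) < c := lt_of_lt_of_le one_pos hc
  have hsq : 1 ≤ Real.sqrt c := by
    rw [show (1:ℝ) = Real.sqrt 1 by simp]
    exact Real.sqrt_le_sqrt hc
  rw [tsum_of_nat_of_neg_add_one ENNReal.summable ENNReal.summable]
  have hneg : (∑' n : ℕ, ENNReal.ofReal (c / (c + ((-((n : ℤ) + 1) : ℤ) : ℝ) ^ 2)))
      ≤ ∑' n : ℕ, ENNReal.ofReal (c / (c + (n : ℝ) ^ 2)) := by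
    apply ENNReal.tsum_le_tsum
    intro n
    apply ENNReal.ofReal_le_ofReal
    have h1 : ((-((n : ℤ) + 1) : ℤ) : ℝ) ^ 2 = ((n:ℝ) + 1) ^ 2 := by push_cast; ring
    rw [h1]
    apply div_le_div_of_nonneg_left hc0.le (by positivity)
    nlinarith [Nat.cast_nonneg (α := ℝ) n]
  calc (∑' n : ℕ, ENNReal.ofReal (c / (c + ((n : ℤ) : ℝ) ^ 2)))
        + ∑' n : ℕ, ENNReal.ofReal (c / (c + ((-((n : ℤ) + 1) : ℤ) : ℝ) ^ 2))
      ≤ ENNReal.ofReal (1 + 2 * Real.sqrt c) + ENNReal.ofReal (1 + 2 * Real.sqrt c) := by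
        gcongr
        · calc _ ≤ ∑' n : ℕ, ENNReal.ofReal (c / (c + (n : ℝ) ^ 2)) := by
                push_cast
                exact le_refl _
            _ ≤ _ := lnat c hc
        · exact hneg.trans (lnat c hc)
    _ ≤ ENNReal.ofReal (6 * Real.sqrt c) := by
        rw [← ENNReal.ofReal_add (by positivity) (by positivity)]
        apply ENNReal.ofReal_le_ofReal
        nlinarith [hsq]

lemma lpi (g : ℤ → ENNReal) : ∀ d : ℕ,
    ∑' u : Fin d → ℤ, ∏ i, g (u i) = (∑' m : ℤ, g m) ^ d := by
  intro d
  induction d with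
  | zero =>
    rw [tsum_eq_single (fun i => (0:ℤ)) (by intro b hb; exact absurd (Subsingleton.elim b _) hb)]
    simp
  | succ d ih =>
    rw [← (Fin.consEquiv (fun _ : Fin (d+1) => ℤ)).tsum_eq]
    have h1 : ∀ p : ℤ × (Fin d → ℤ),
        (∏ i, g (((Fin.consEquiv (fun _ : Fin (d+1) => ℤ)) p) i))
          = g p.1 * ∏ i : Fin d, g (p.2 i) := by
      intro p
      rw [Fin.prod_univ_succ]
      simp only [Fin.consEquiv_apply, Fin.cons_zero, Fin.cons_succ]
    calc ∑' p : ℤ × (Fin d → ℤ), ∏ i, g (((Fin.consEquiv (fun _ : Fin (d+1) => ℤ)) p) i)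
        = ∑' p : ℤ × (Fin d → ℤ), g p.1 * ∏ i : Fin d, g (p.2 i) := tsum_congr h1
      _ = ∑' (a : ℤ) (b : Fin d → ℤ), g a * ∏ i : Fin d, g (b i) :=
          ENNReal.tsum_prod (f := fun (a : ℤ) (b : Fin d → ℤ) => g a * ∏ i : Fin d, g (b i))
      _ = ∑' (a : ℤ), g a * ∑' (b : Fin d → ℤ), ∏ i : Fin d, g (b i) := by
          apply tsum_congr
          intro a
          rw [ENNReal.tsum_mul_left]
      _ = (∑' m : ℤ, g m) ^ (d + 1) := by
          rw [ENNReal.tsum_mul_right, ih, pow_succ]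
          ring

set_option maxHeartbeats 1600000 in
lemma lkey (d : ℕ) (hd : 1 ≤ (d:ℝ)) (x N M T : ℝ) (hx : 1 ≤ x) (hM : 0 ≤ M) (hT : 0 ≤ T)
    (hNx : 4 * π * x ≤ N) (hNd : 4 * π * (d:ℝ) ≤ N) :
    x ^ N / (((x + M) ^ 2 + T) ^ (N / 2)) ≤
      ((1 + M / (d:ℝ)) ^ d)⁻¹ * (x / (x + T)) := by
  have hπ : (3:ℝ) < π := pi_gt_three
  have x0 : (0:ℝ) < x := lt_of_lt_of_le one_pos hx
  have hxy : x ≤ x + M := by linarith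
  have hy0 : (0:ℝ) < x + M := lt_of_lt_of_le x0 hxy
  have hN0 : (0:ℝ) < N := by nlinarith
  have hD0 : (0:ℝ) < (x + M) ^ 2 + T := by positivity
  -- Step 1/2 : LHS = (x^2/D)^(N/2)
  have e1 : x ^ N / ((x + M) ^ 2 + T) ^ (N / 2)
      = (x ^ 2 / ((x + M) ^ 2 + T)) ^ (N / 2) := by
    rw [Real.div_rpow (by positivity) hD0.le]
    congr 1
    rw [← Real.rpow_natCast x 2, ← Real.rpow_mul x0.le]
    congr 1
    push_cast
    ring
  -- Step 3 : base inequality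
  have hx2y2 : x ^ 2 ≤ (x + M) ^ 2 := by nlinarith
  have bsq : (x ^ 2 / ((x + M) ^ 2 + T)) ^ 2
      ≤ (x / (x + M)) ^ 2 * (x ^ 2 / (x ^ 2 + T)) := by
    have hkey : (x + M) ^ 2 * (x ^ 2 + T) ≤ ((x + M) ^ 2 + T) ^ 2 := by
      nlinarith [mul_le_mul_of_nonneg_left hx2y2 (sq_nonneg (x + M)),
        mul_nonneg (sq_nonneg (x + M)) hT, sq_nonneg T]
    rw [div_pow, div_pow, div_mul_div_comm,
      div_le_div_iff₀ (by positivity) (by positivity)]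
    nlinarith [mul_le_mul_of_nonneg_left hkey (by positivity : (0:ℝ) ≤ x ^ 2 * x ^ 2)]
  -- Step 4
  have e2 : (x ^ 2 / ((x + M) ^ 2 + T)) ^ (N / 2)
      = ((x ^ 2 / ((x + M) ^ 2 + T)) ^ 2) ^ (N / 4) := by
    rw [← Real.rpow_natCast (x ^ 2 / ((x + M) ^ 2 + T)) 2, ← Real.rpow_mul (by positivity)]
    congr 1
    push_cast
    ring
  have e3 : ((x / (x + M)) ^ 2) ^ (N / 4) = (x / (x + M)) ^ (N / 2) := by
    rw [← Real.rpow_natCast (x / (x + M)) 2, ← Real.rpow_mul (by positivity)]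
    congr 1
    push_cast
    ring
  have step4 : (x ^ 2 / ((x + M) ^ 2 + T)) ^ (N / 2)
      ≤ (x / (x + M)) ^ (N / 2) * (x ^ 2 / (x ^ 2 + T)) ^ (N / 4) := by
    rw [e2, ← e3, ← Real.mul_rpow (by positivity) (by positivity)]
    exact Real.rpow_le_rpow (by positivity) bsq (by positivity)
  -- Step 5 : t-factor
  have step5 : (x ^ 2 / (x ^ 2 + T)) ^ (N / 4) ≤ x / (x + T) := by
    have hBeq : x ^ 2 / (x ^ 2 + T) = (1 + T / x ^ 2)⁻¹ := by
      rw [show 1 + T / x ^ 2 = (x ^ 2 + T) / x ^ 2 by field_simp, inv_div]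
    have hxN4 : x ≤ N / 4 := by nlinarith [mul_pos (sub_pos.mpr hπ) x0]
    have hBern : 1 + x * (T / x ^ 2) ≤ (1 + T / x ^ 2) ^ (x : ℝ) :=
      one_add_mul_self_le_rpow_one_add
        (by have := div_nonneg hT (sq_nonneg x); linarith) hx
    have hTx : x * (T / x ^ 2) = T / x := by field_simp
    have hchain : 1 + T / x ≤ (1 + T / x ^ 2) ^ (N / 4) := by
      calc 1 + T / x = 1 + x * (T / x ^ 2) := by rw [hTx]
        _ ≤ (1 + T / x ^ 2) ^ (x : ℝ) := hBern
        _ ≤ (1 + T / x ^ 2) ^ (N / 4) :=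
            Real.rpow_le_rpow_of_exponent_le
              (by have := div_nonneg hT (sq_nonneg x); linarith) hxN4
    rw [hBeq, Real.inv_rpow (by positivity)]
    have h10 : (0:ℝ) < 1 + T / x := by positivity
    calc ((1 + T / x ^ 2) ^ (N / 4))⁻¹ ≤ (1 + T / x)⁻¹ := by
          exact inv_anti₀ h10 hchain
      _ = x / (x + T) := by
          rw [show 1 + T / x = (x + T) / x by field_simp, inv_div]
  -- Step 6 : u-factor
  have step6 : (x / (x + M)) ^ (N / 2) ≤ ((1 + M / (d:ℝ)) ^ d)⁻¹ := by
    have hd0 : (0:ℝ) < (d:ℝ) := lt_of_lt_of_le one_pos hd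
    have hxz : x ≤ max x (d:ℝ) := le_max_left _ _
    have hdz : (d:ℝ) ≤ max x (d:ℝ) := le_max_right _ _
    have hz0 : (0:ℝ) < max x (d:ℝ) := lt_of_lt_of_le x0 hxz
    have hMz : (0:ℝ) ≤ M / max x (d:ℝ) := div_nonneg hM hz0.le
    have hMd : (0:ℝ) ≤ M / (d:ℝ) := div_nonneg hM hd0.le
    have hMx : (0:ℝ) ≤ M / x := div_nonneg hM x0.le
    have hNz : max x (d:ℝ) ≤ N / 2 := by
      apply max_le
      · nlinarith [mul_pos (sub_pos.mpr hπ) x0]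
      · nlinarith [mul_pos (sub_pos.mpr hπ) hd0]
    have a1 : 1 + M / max x (d:ℝ) ≤ 1 + M / x := by gcongr
    have b1 : 1 + M / (d:ℝ) ≤ (1 + M / max x (d:ℝ)) ^ (max x (d:ℝ) / (d:ℝ)) := by
      have hb := one_add_mul_self_le_rpow_one_add
        (show (-1:ℝ) ≤ M / max x (d:ℝ) by linarith)
        (show 1 ≤ max x (d:ℝ) / (d:ℝ) from (one_le_div hd0).mpr hdz)
      calc 1 + M / (d:ℝ) = 1 + max x (d:ℝ) / (d:ℝ) * (M / max x (d:ℝ)) := by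
            field_simp
        _ ≤ _ := hb
    have b2 : ((1 + M / max x (d:ℝ)) ^ (max x (d:ℝ) / (d:ℝ))) ^ ((d:ℕ) : ℝ)
        = (1 + M / max x (d:ℝ)) ^ (max x (d:ℝ)) := by
      rw [← Real.rpow_mul (by positivity)]
      congr 1
      field_simp
    have b3 : (1 + M / (d:ℝ)) ^ ((d:ℕ) : ℝ) ≤ (1 + M / x) ^ (N / 2) := by
      calc (1 + M / (d:ℝ)) ^ ((d:ℕ) : ℝ)
          ≤ ((1 + M / max x (d:ℝ)) ^ (max x (d:ℝ) / (d:ℝ))) ^ ((d:ℕ) : ℝ) :=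
            Real.rpow_le_rpow (by positivity) b1 (by positivity)
        _ = (1 + M / max x (d:ℝ)) ^ (max x (d:ℝ)) := b2
        _ ≤ (1 + M / max x (d:ℝ)) ^ (N / 2) :=
            Real.rpow_le_rpow_of_exponent_le (by linarith) hNz
        _ ≤ (1 + M / x) ^ (N / 2) :=
            Real.rpow_le_rpow (by positivity) a1 (by positivity)
    have hAeq : x / (x + M) = (1 + M / x)⁻¹ := by
      rw [show 1 + M / x = (x + M) / x by field_simp, inv_div]
    rw [hAeq, Real.inv_rpow (by positivity),
      show (1 + M / (d:ℝ)) ^ d = (1 + M / (d:ℝ)) ^ ((d:ℕ) : ℝ) from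
        (Real.rpow_natCast _ d).symm]
    exact inv_anti₀ (by positivity) b3
  calc x ^ N / ((x + M) ^ 2 + T) ^ (N / 2)
      = (x ^ 2 / ((x + M) ^ 2 + T)) ^ (N / 2) := e1
    _ ≤ (x / (x + M)) ^ (N / 2) * (x ^ 2 / (x ^ 2 + T)) ^ (N / 4) := step4
    _ ≤ ((1 + M / (d:ℝ)) ^ d)⁻¹ * (x / (x + T)) :=
        mul_le_mul step6 step5 (by positivity) (by positivity)

/-- the lattice-sum estimate in the intermediate cuspidal region:
for `N = k(n+1)` and `x₀ ≤ x ≤ N/(4π)`, the sum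
`∑_{u ∈ ℤ^{2(n−1)}} ∑_{t ∈ ℤ} x^N/((x + ‖u‖²)² + t²)^{N/2}` is `O(√x)`. -/
theorem cuspidal_lattice_sum_intermediate (n : ℕ) (hn : 2 ≤ n) (x₀ : ℝ) (hx₀ : 1 ≤ x₀) :
    ∃ C : ℝ, 0 < C ∧ ∃ k₀ : ℕ, ∀ k : ℕ, k₀ ≤ k →
      ∀ N : ℝ, N = (k * (n + 1) : ℕ) →
        ∀ x : ℝ, x₀ ≤ x → x ≤ N / (4 * π) →
          (∑' u : Fin (2 * (n - 1)) → ℤ, ∑' t : ℤ,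
              x ^ N / (((x + ∑ i, ((u i : ℝ)) ^ 2) ^ 2 + (t : ℝ) ^ 2) ^ (N / 2))) ≤
            C * Real.sqrt x := by
  set d : ℕ := 2 * (n - 1) with hdd
  have hd2 : 2 ≤ d := by omega
  have hd2r : (2:ℝ) ≤ (d:ℝ) := by exact_mod_cast hd2
  have hd0 : (0:ℝ) < (d:ℝ) := by linarith
  have hd1 : (1:ℝ) ≤ (d:ℝ) := by linarith
  have hsd : (0:ℝ) < Real.sqrt d := Real.sqrt_pos.mpr hd0
  have hsd1 : (1:ℝ) ≤ Real.sqrt d := by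
    rw [show (1:ℝ) = Real.sqrt 1 by simp]
    exact Real.sqrt_le_sqrt hd1
  refine ⟨6 * (6 * Real.sqrt d) ^ d, by positivity, 9 * n, ?_⟩
  intro k hk N hN x hx hxle
  have hx1 : (1:ℝ) ≤ x := le_trans hx₀ hx
  have x0 : (0:ℝ) < x := lt_of_lt_of_le one_pos hx1
  have hπ : (3:ℝ) < π := pi_gt_three
  have hπ' : π < 3.15 := pi_lt_d2
  have hNval : N = (k:ℝ) * ((n:ℝ) + 1) := by rw [hN]; push_cast; ring
  have hNx : 4 * π * x ≤ N := by
    have h4π : (0:ℝ) < 4 * π := by linarith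
    have := (le_div_iff₀ h4π).mp hxle
    linarith
  have hdr : (d:ℝ) = 2 * ((n:ℝ) - 1) := by
    rw [hdd]
    push_cast [Nat.cast_sub (by omega : 1 ≤ n)]
    ring
  have hnr : (2:ℝ) ≤ (n:ℝ) := by exact_mod_cast hn
  have hkr : (9:ℝ) * (n:ℝ) ≤ (k:ℝ) := by exact_mod_cast hk
  have hNd : 4 * π * (d:ℝ) ≤ N := by
    rw [hdr, hNval]
    nlinarith [mul_nonneg (sub_nonneg.mpr hkr) (by linarith : (0:ℝ) ≤ (n:ℝ) + 1),
      mul_nonneg (by linarith : (0:ℝ) ≤ (n:ℝ)) (by linarith : (0:ℝ) ≤ (n:ℝ) - 2),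
      mul_nonneg (by linarith : (0:ℝ) ≤ 3.15 - π) (by linarith : (0:ℝ) ≤ (n:ℝ) - 1)]
  -- pointwise bound
  have hFnn : ∀ (u : Fin d → ℤ) (t : ℤ),
      0 ≤ x ^ N / (((x + ∑ i, ((u i : ℝ)) ^ 2) ^ 2 + (t : ℝ) ^ 2) ^ (N / 2)) := by
    intro u t
    positivity
  have hPnn : ∀ u : Fin d → ℤ, 0 ≤ ∏ i, (d:ℝ) / ((d:ℝ) + ((u i : ℝ)) ^ 2) := by
    intro u
    apply Finset.prod_nonneg
    intro i _
    positivity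
  have hPQ : ∀ (u : Fin d → ℤ) (t : ℤ),
      x ^ N / (((x + ∑ i, ((u i : ℝ)) ^ 2) ^ 2 + (t : ℝ) ^ 2) ^ (N / 2)) ≤
        (∏ i, (d:ℝ) / ((d:ℝ) + ((u i : ℝ)) ^ 2)) * (x / (x + (t : ℝ) ^ 2)) := by
    intro u t
    set M : ℝ := ∑ i, ((u i : ℝ)) ^ 2 with hM
    have hMnn : 0 ≤ M := Finset.sum_nonneg fun i _ => sq_nonneg _
    have hstep := lkey d hd1 x N M ((t:ℝ)^2) hx1 hMnn (sq_nonneg _) hNx hNd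
    refine hstep.trans (mul_le_mul_of_nonneg_right ?_ (by positivity))
    -- ((1+M/d)^d)⁻¹ ≤ ∏ d/(d+u i²)
    have h1 : ∀ i, ((u i : ℝ)) ^ 2 ≤ M :=
      fun i => Finset.single_le_sum (fun j _ => sq_nonneg ((u j : ℝ))) (Finset.mem_univ i)
    have h2 : ∏ i, (1 + ((u i : ℝ)) ^ 2 / (d:ℝ)) ≤ (1 + M / (d:ℝ)) ^ d := by
      calc ∏ i, (1 + ((u i : ℝ)) ^ 2 / (d:ℝ))
          ≤ ∏ _i : Fin d, (1 + M / (d:ℝ)) :=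
            Finset.prod_le_prod (fun i _ => by positivity)
              (fun i _ => by
                have := mul_le_mul_of_nonneg_right (h1 i) (inv_nonneg.mpr hd0.le)
                rw [div_eq_mul_inv, div_eq_mul_inv]
                linarith)
        _ = (1 + M / (d:ℝ)) ^ d := by simp
    have hprodpos : (0:ℝ) < ∏ i, (1 + ((u i : ℝ)) ^ 2 / (d:ℝ)) :=
      Finset.prod_pos fun i _ => by positivity
    have h3 : ((1 + M / (d:ℝ)) ^ d)⁻¹ ≤ (∏ i, (1 + ((u i : ℝ)) ^ 2 / (d:ℝ)))⁻¹ :=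
      inv_anti₀ hprodpos h2
    refine h3.trans (le_of_eq ?_)
    rw [← Finset.prod_inv_distrib]
    apply Finset.prod_congr rfl
    intro i _
    rw [show 1 + ((u i : ℝ)) ^ 2 / (d:ℝ) = ((d:ℝ) + ((u i : ℝ)) ^ 2) / (d:ℝ) by
      field_simp, inv_div]
  -- ENNReal machinery
  set G : (Fin d → ℤ) → ℤ → ENNReal := fun u t =>
    ENNReal.ofReal (x ^ N / (((x + ∑ i, ((u i : ℝ)) ^ 2) ^ 2 + (t : ℝ) ^ 2) ^ (N / 2)))
    with hG
  have hS : (∑' u : Fin d → ℤ, ∑' t : ℤ, G u t)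
      ≤ ENNReal.ofReal (6 * (6 * Real.sqrt d) ^ d * Real.sqrt x) := by
    calc (∑' u : Fin d → ℤ, ∑' t : ℤ, G u t)
        ≤ ∑' u : Fin d → ℤ, ∑' t : ℤ,
            ENNReal.ofReal (∏ i, (d:ℝ) / ((d:ℝ) + ((u i : ℝ)) ^ 2))
              * ENNReal.ofReal (x / (x + (t : ℝ) ^ 2)) := by
          apply ENNReal.tsum_le_tsum
          intro u
          apply ENNReal.tsum_le_tsum
          intro t
          rw [hG, ← ENNReal.ofReal_mul (hPnn u)]
          exact ENNReal.ofReal_le_ofReal (hPQ u t)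
      _ = (∑' u : Fin d → ℤ, ENNReal.ofReal (∏ i, (d:ℝ) / ((d:ℝ) + ((u i : ℝ)) ^ 2)))
            * (∑' t : ℤ, ENNReal.ofReal (x / (x + (t : ℝ) ^ 2))) := by
          rw [← ENNReal.tsum_mul_right]
          exact tsum_congr fun u => ENNReal.tsum_mul_left
      _ ≤ ENNReal.ofReal ((6 * Real.sqrt d) ^ d) * ENNReal.ofReal (6 * Real.sqrt x) := by
          apply mul_le_mul'
          · have he : ∀ u : Fin d → ℤ,
                ENNReal.ofReal (∏ i, (d:ℝ) / ((d:ℝ) + ((u i : ℝ)) ^ 2))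
                  = ∏ i, ENNReal.ofReal ((d:ℝ) / ((d:ℝ) + ((u i : ℝ)) ^ 2)) := by
              intro u
              exact ENNReal.ofReal_prod_of_nonneg fun i _ => by positivity
            calc (∑' u : Fin d → ℤ, ENNReal.ofReal (∏ i, (d:ℝ) / ((d:ℝ) + ((u i : ℝ)) ^ 2)))
                = ∑' u : Fin d → ℤ, ∏ i, ENNReal.ofReal ((d:ℝ) / ((d:ℝ) + ((u i : ℝ)) ^ 2)) :=
                  tsum_congr he
              _ = (∑' m : ℤ, ENNReal.ofReal ((d:ℝ) / ((d:ℝ) + (m : ℝ) ^ 2))) ^ d :=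
                  lpi (fun m => ENNReal.ofReal ((d:ℝ) / ((d:ℝ) + (m : ℝ) ^ 2))) d
              _ ≤ (ENNReal.ofReal (6 * Real.sqrt d)) ^ d := by
                  gcongr
                  exact lint (d:ℝ) hd1
              _ = ENNReal.ofReal ((6 * Real.sqrt d) ^ d) :=
                  (ENNReal.ofReal_pow (by positivity) d).symm
          · exact lint x hx1
      _ = ENNReal.ofReal (6 * (6 * Real.sqrt d) ^ d * Real.sqrt x) := by
          rw [← ENNReal.ofReal_mul (by positivity)]
          congr 1
          ring
  have hSlt : (∑' u : Fin d → ℤ, ∑' t : ℤ, G u t) < ⊤ :=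
    lt_of_le_of_lt hS ENNReal.ofReal_lt_top
  have hGu : ∀ u : Fin d → ℤ, (∑' t : ℤ, G u t) ≠ ⊤ := by
    intro u
    exact (lt_of_le_of_lt (ENNReal.le_tsum u) hSlt).ne
  have hinner : ∀ u : Fin d → ℤ,
      (∑' t : ℤ, x ^ N / (((x + ∑ i, ((u i : ℝ)) ^ 2) ^ 2 + (t : ℝ) ^ 2) ^ (N / 2)))
        = (∑' t : ℤ, G u t).toReal := by
    intro u
    rw [ENNReal.tsum_toReal_eq fun t => ENNReal.ofReal_ne_top]
    exact tsum_congr fun t => (ENNReal.toReal_ofReal (hFnn u t)).symm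
  calc (∑' u : Fin d → ℤ, ∑' t : ℤ,
          x ^ N / (((x + ∑ i, ((u i : ℝ)) ^ 2) ^ 2 + (t : ℝ) ^ 2) ^ (N / 2)))
      = (∑' u : Fin d → ℤ, ∑' t : ℤ, G u t).toReal := by
        rw [ENNReal.tsum_toReal_eq hGu]
        exact tsum_congr hinner
    _ ≤ 6 * (6 * Real.sqrt d) ^ d * Real.sqrt x :=
        ENNReal.toReal_le_of_le_ofReal (by positivity) hS
end
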